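/- arXiv:1710.00118 — 3 statements merged into one kernel-verified Lean document; each statement's English description precedes it below -/
import Mathlib

section
/- The Hadwiger number of the complete d-partite graph K_{2,2,...,2} (with d parts of size 2) is floor(3d/2), i.e., it contains a complete minor of order floor(3d/2) and no larger complete minor. -/
open Set

noncomputable section

abbrev Ept (n : ℕ) := EuclideanSpace ℝ (Fin n)

variable {V : Type*}

/-- A polytope: the convex hull of a finite set of points. -/
def IsPolytope [AddCommGroup V] [Module ℝ V] (P : Set V) : Prop :=
  ∃ S : Finset V, P = convexHull ℝ (S : Set V)

/-- The (affine) dimension of a set. -/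
def pdim [AddCommGroup V] [Module ℝ V] (F : Set V) : ℕ :=
  Module.finrank ℝ (vectorSpan ℝ F)

open scoped Classical in
/-- Rank of a face in the face lattice: the empty face has rank 0,
a k-dimensional face has rank k+1. -/
def frank [AddCommGroup V] [Module ℝ V] (F : Set V) : ℕ :=
  if F = ∅ then 0 else pdim F + 1

section TopDefs
variable [AddCommGroup V] [Module ℝ V] [TopologicalSpace V]
variable {W : Type*} [AddCommGroup W] [Module ℝ W] [TopologicalSpace W]

/-- The face lattice of `P`: all exposed faces (including `∅` and `P`), ordered by inclusion. -/
abbrev FaceLat (P : Set V) := {F : Set V // IsExposed ℝ P F}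

/-- Combinatorial equivalence: isomorphism of face lattices. -/
def CombEquiv (P : Set V) (Q : Set W) : Prop :=
  Nonempty (FaceLat P ≃o FaceLat Q)

/-- The k-skeleton of `P` as a poset: all faces of dimension at most `k`, ordered by inclusion. -/
abbrev kSkel (P : Set V) (k : ℕ) := {F : Set V // IsExposed ℝ P F ∧ pdim F ≤ k}

/-- k-equivalence: combinatorial equivalence of k-skeletons. -/
def kEquiv (P : Set V) (Q : Set W) (k : ℕ) : Prop :=
  Nonempty (kSkel P k ≃o kSkel Q k)

/-- The graph (1-skeleton) of a polytope: vertices are the exposed points,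
two vertices adjacent when the segment between them is a face. -/
def polyGraph (P : Set V) : SimpleGraph {x : V // IsExposed ℝ P {x}} where
  Adj u v := u ≠ v ∧ IsExposed ℝ P (segment ℝ u.1 v.1)
  symm := by
    constructor
    intro u v h
    exact ⟨h.1.symm, by rw [segment_symm]; exact h.2⟩
  loopless := by
    constructor
    intro u h
    exact h.1 rfl

/-- A simple `d`-polytope: every vertex lies on exactly `d` edges. -/
def IsSimplePolytope (P : Set V) (d : ℕ) : Prop :=
  IsPolytope P ∧ pdim P = d ∧
    ∀ x : V, IsExposed ℝ P {x} →
      {F : Set V | IsExposed ℝ P F ∧ pdim F = 1 ∧ x ∈ F}.ncard = d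

end TopDefs

/-- The `d`-dimensional crosspolytope `conv{±e₁, …, ±e_d}`. -/
def cross (d : ℕ) : Set (Ept d) :=
  convexHull ℝ
    {x | ∃ i : Fin d, x = EuclideanSpace.single i (1 : ℝ) ∨ x = -EuclideanSpace.single i (1 : ℝ)}


/-- `G` has a complete minor of order `n`: there are `n` pairwise disjoint nonempty
connected branch sets, any two of them joined by an edge of `G`. -/
def HasCompleteMinor {α : Type*} (G : SimpleGraph α) (n : ℕ) : Prop :=
  ∃ B : Fin n → Set α,
    (∀ i, (B i).Nonempty) ∧
    (∀ i, (G.induce (B i)).Connected) ∧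
    (Pairwise fun i j => Disjoint (B i) (B j)) ∧
    (∀ i j, i ≠ j → ∃ u ∈ B i, ∃ v ∈ B j, G.Adj u v)

section HadwigerAux

/-- Branch set `j` in the cocktail-party graph construction. -/
def cpBset (d j : ℕ) : Set ((_ : Fin d) × Fin 2) :=
  {v | (v.2.1 = 0 ∧ 3 * (v.1.1 / 2) + v.1.1 % 2 = j) ∨
       (v.2.1 = 1 ∧ 3 * (v.1.1 / 2) + 2 = j ∧ 2 * (v.1.1 / 2) + 1 < d)}

lemma cp_memB0 {d j : ℕ} (p : ℕ) (hp : p < d) (hphi : 3 * (p / 2) + p % 2 = j) :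
    (⟨⟨p, hp⟩, 0⟩ : (_ : Fin d) × Fin 2) ∈ cpBset d j :=
  Or.inl ⟨rfl, hphi⟩

lemma cp_memB1 {d j : ℕ} (p : ℕ) (hp : p < d) (hd : 2 * (p / 2) + 1 < d)
    (hphi : 3 * (p / 2) + 2 = j) :
    (⟨⟨p, hp⟩, 1⟩ : (_ : Fin d) × Fin 2) ∈ cpBset d j :=
  Or.inr ⟨rfl, hphi, hd⟩

lemma cp_adjW {d i j p q : ℕ} {hp : p < d} {hq : q < d} {x y : Fin 2}
    (hu : (⟨⟨p, hp⟩, x⟩ : (_ : Fin d) × Fin 2) ∈ cpBset d i)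
    (hv : (⟨⟨q, hq⟩, y⟩ : (_ : Fin d) × Fin 2) ∈ cpBset d j) (hne : p ≠ q) :
    ∃ a ∈ cpBset d i, ∃ b ∈ cpBset d j,
      (SimpleGraph.completeMultipartiteGraph fun _ : Fin d => Fin 2).Adj a b :=
  ⟨_, hu, _, hv, fun h => hne (congrArg Fin.val h)⟩

lemma cp_connected_pair {α : Type*} (G : SimpleGraph α) (s : Set α) (hne : s.Nonempty)
    (h : ∀ u ∈ s, ∀ v ∈ s, u = v ∨ G.Adj u v) : (G.induce s).Connected := by
  haveI : Nonempty s := hne.to_subtype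
  refine ⟨fun u v => ?_⟩
  rcases h u.1 u.2 v.1 v.2 with heq | hadj
  · exact (Subtype.ext heq) ▸ SimpleGraph.Reachable.refl u
  · exact SimpleGraph.Adj.reachable hadj

end HadwigerAux

/-- Halin: the Hadwiger number of `K_{2,2,…,2}` with `d` parts is
`⌊3d/2⌋`. -/
theorem hadwiger_cocktail_party (d : ℕ) :
    HasCompleteMinor (SimpleGraph.completeMultipartiteGraph fun _ : Fin d => Fin 2) (3 * d / 2) ∧
    (∀ n, HasCompleteMinor (SimpleGraph.completeMultipartiteGraph fun _ : Fin d => Fin 2) n →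
      n ≤ 3 * d / 2) := by
  constructor
  · -- lower bound: explicit branch sets
    show HasCompleteMinor _ (3 * d / 2)
    have hBne : ∀ j : Fin (3 * d / 2), (cpBset d j.1).Nonempty := by
      intro j
      have hj : j.1 < 3 * d / 2 := j.isLt
      have h3 : j.1 % 3 = 0 ∨ j.1 % 3 = 1 ∨ j.1 % 3 = 2 := by omega
      rcases h3 with h | h | h
      · exact ⟨_, cp_memB0 (2 * (j.1 / 3)) (by omega) (by omega)⟩
      · exact ⟨_, cp_memB0 (2 * (j.1 / 3) + 1) (by omega) (by omega)⟩
      · exact ⟨_, cp_memB1 (2 * (j.1 / 3)) (by omega) (by omega) (by omega)⟩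
    refine ⟨fun j => cpBset d j.1, hBne, ?_, ?_, ?_⟩
    · -- connected
      intro j
      refine cp_connected_pair _ _ (hBne j) ?_
      intro u hu v hv
      by_cases hp : u.1.1 = v.1.1
      · left
        obtain ⟨⟨pu, hpu'⟩, ⟨xu, hxu⟩⟩ := u
        obtain ⟨⟨pv, hpv'⟩, ⟨xv, hxv⟩⟩ := v
        simp only [cpBset, Set.mem_setOf_eq] at hu hv
        simp only at hp
        have hx : xu = xv := by omega
        subst hp; subst hx; rfl
      · exact Or.inr (fun h => hp (congrArg Fin.val h))
    · -- disjoint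
      intro i j hij
      rw [Set.disjoint_left]
      intro v hvi hvj
      simp only [cpBset, Set.mem_setOf_eq] at hvi hvj
      exact hij (Fin.ext (by omega))
    · -- adjacency
      intro i j hij
      have hi : i.1 < 3 * d / 2 := i.isLt
      have hj : j.1 < 3 * d / 2 := j.isLt
      have hij' : i.1 ≠ j.1 := Fin.val_ne_of_ne hij
      have h3i : i.1 % 3 = 0 ∨ i.1 % 3 = 1 ∨ i.1 % 3 = 2 := by omega
      have h3j : j.1 % 3 = 0 ∨ j.1 % 3 = 1 ∨ j.1 % 3 = 2 := by omega
      rcases h3i with hri | hri | hri <;> rcases h3j with hrj | hrj | hrj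
      · exact cp_adjW (cp_memB0 (2 * (i.1 / 3)) (by omega) (by omega))
          (cp_memB0 (2 * (j.1 / 3)) (by omega) (by omega)) (by omega)
      · exact cp_adjW (cp_memB0 (2 * (i.1 / 3)) (by omega) (by omega))
          (cp_memB0 (2 * (j.1 / 3) + 1) (by omega) (by omega)) (by omega)
      · by_cases hm : i.1 / 3 = j.1 / 3
        · exact cp_adjW (cp_memB0 (2 * (i.1 / 3)) (by omega) (by omega))
            (cp_memB1 (2 * (j.1 / 3) + 1) (by omega) (by omega) (by omega)) (by omega)
        · exact cp_adjW (cp_memB0 (2 * (i.1 / 3)) (by omega) (by omega))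
            (cp_memB1 (2 * (j.1 / 3)) (by omega) (by omega) (by omega)) (by omega)
      · exact cp_adjW (cp_memB0 (2 * (i.1 / 3) + 1) (by omega) (by omega))
          (cp_memB0 (2 * (j.1 / 3)) (by omega) (by omega)) (by omega)
      · exact cp_adjW (cp_memB0 (2 * (i.1 / 3) + 1) (by omega) (by omega))
          (cp_memB0 (2 * (j.1 / 3) + 1) (by omega) (by omega)) (by omega)
      · exact cp_adjW (cp_memB0 (2 * (i.1 / 3) + 1) (by omega) (by omega))
          (cp_memB1 (2 * (j.1 / 3)) (by omega) (by omega) (by omega)) (by omega)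
      · by_cases hm : i.1 / 3 = j.1 / 3
        · exact cp_adjW (cp_memB1 (2 * (i.1 / 3) + 1) (by omega) (by omega) (by omega))
            (cp_memB0 (2 * (j.1 / 3)) (by omega) (by omega)) (by omega)
        · exact cp_adjW (cp_memB1 (2 * (i.1 / 3)) (by omega) (by omega) (by omega))
            (cp_memB0 (2 * (j.1 / 3)) (by omega) (by omega)) (by omega)
      · exact cp_adjW (cp_memB1 (2 * (i.1 / 3)) (by omega) (by omega) (by omega))
          (cp_memB0 (2 * (j.1 / 3) + 1) (by omega) (by omega)) (by omega)
      · exact cp_adjW (cp_memB1 (2 * (i.1 / 3)) (by omega) (by omega) (by omega))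
          (cp_memB1 (2 * (j.1 / 3)) (by omega) (by omega) (by omega)) (by omega)
  · -- upper bound: counting argument
    intro n hn
    classical
    obtain ⟨B, hne, _hconn, hdisj, hadj⟩ := hn
    rw [Nat.le_div_iff_mul_le (by norm_num)]
    set T : Fin n → Finset ((_ : Fin d) × Fin 2) := fun i => (Set.toFinite (B i)).toFinset with hT
    have hmem : ∀ i v, v ∈ T i ↔ v ∈ B i := fun i v => Set.Finite.mem_toFinset _
    have hTdisj : ∀ i j : Fin n, i ≠ j → Disjoint (T i) (T j) := by
      intro i j hij
      rw [Finset.disjoint_left]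
      intro a hai haj
      exact (Set.disjoint_left.mp (hdisj hij)) ((hmem i a).mp hai) ((hmem j a).mp haj)
    have hcard1 : ∀ i, 1 ≤ (T i).card := by
      intro i
      obtain ⟨v, hv⟩ := hne i
      exact Finset.card_pos.mpr ⟨v, (hmem i v).mpr hv⟩
    -- total size bound
    have hsum : ∑ i : Fin n, (T i).card ≤ 2 * d := by
      have h1 : (Finset.univ.biUnion T).card = ∑ i : Fin n, (T i).card :=
        Finset.card_biUnion (fun i _ j _ hij => hTdisj i j hij)
      have h2 : (Finset.univ.biUnion T).card ≤ Fintype.card ((_ : Fin d) × Fin 2) :=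
        Finset.card_le_univ _
      have h3 : Fintype.card ((_ : Fin d) × Fin 2) = 2 * d := by
        simp [Fintype.card_sigma, mul_comm]
      omega
    -- singleton branch sets occupy distinct parts
    set S : Finset (Fin n) := Finset.univ.filter (fun i => (T i).card = 1) with hS
    have hScard : S.card ≤ d := by
      have := Finset.card_le_card_of_injOn (fun i => (hne i).some.1)
        (fun a _ => Finset.mem_univ _) (s := S) (t := Finset.univ) ?_
      · simpa using this
      · intro a ha b hb hfab
        by_contra hab
        obtain ⟨u, hu, v, hv, huv⟩ := hadj a b hab
        have hsingle : ∀ c : Fin n, c ∈ S → ∀ w ∈ B c, w = (hne c).some := by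
          intro c hc w hw
          obtain ⟨z, hz⟩ := Finset.card_eq_one.mp (by simpa [hS] using hc)
          have h1 : w = z := by
            have := (hmem c w).mpr hw; rw [hz] at this; simpa using this
          have h2 : (hne c).some = z := by
            have := (hmem c _).mpr (hne c).some_mem; rw [hz] at this; simpa using this
          rw [h1, h2]
        have h1 := hsingle a ha u hu
        have h2 := hsingle b hb v hv
        apply huv
        show u.1 = v.1
        rw [h1, h2]
        exact hfab
    -- pointwise bound and conclusion
    have hkey : n * 2 ≤ ∑ i : Fin n, ((T i).card + if (T i).card = 1 then 1 else 0) := by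
      have : ∀ i : Fin n, 2 ≤ (T i).card + if (T i).card = 1 then 1 else 0 := by
        intro i
        have := hcard1 i
        split_ifs <;> omega
      calc n * 2 = ∑ _i : Fin n, 2 := by simp [mul_comm]
      _ ≤ _ := Finset.sum_le_sum (fun i _ => this i)
    have hsplit : ∑ i : Fin n, ((T i).card + if (T i).card = 1 then 1 else 0)
        = (∑ i : Fin n, (T i).card) + S.card := by
      rw [Finset.sum_add_distrib]
      congr 1
      rw [hS]
      exact_mod_cast Finset.sum_boole _ _
    omega


end
end

section
/- Let k ≥ 1, let j_1, ..., j_s be integers with each j_i ≥ k+1, and let d = j_1 + ... + j_s. Then the join X_{j_1} * X_{j_2} * ... * X_{j_s} of crosspolytopes is a polytope of dimension d + s - 1 whose k-skeleton is combinatorially equivalent to the k-skeleton of the d-crosspolytope X_d. -/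
open Set

noncomputable section

variable {V : Type*}

/-- The join `X_{j 0} * X_{j 1} * ⋯ * X_{j (s-1)}` of crosspolytopes, embedded in
skew affine subspaces of `(Π i, ℝ^{j i}) × ℝˢ`. -/
def crossJoin (s : ℕ) (j : Fin s → ℕ) : Set ((Π i, Ept (j i)) × Ept s) :=
  convexHull ℝ (⋃ i : Fin s,
    (fun x : Ept (j i) =>
      ((Function.update (0 : Π i, Ept (j i)) i x, EuclideanSpace.single i (1 : ℝ)) :
        (Π i, Ept (j i)) × Ept s)) '' cross (j i))

section Generic

variable {E : Type*} [NormedAddCommGroup E] [NormedSpace ℝ E]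

theorem hull_le_halfspace (l : E →L[ℝ] ℝ) {V : Set E} {c : ℝ} (h : ∀ v ∈ V, l v ≤ c) :
    ∀ x ∈ convexHull ℝ V, l x ≤ c := by
  intro x hx
  have : convexHull ℝ V ⊆ {w | l w ≤ c} :=
    convexHull_min h (convex_halfSpace_le ⟨fun a b => map_add l a b, fun r a => map_smul l r a⟩ c)
  exact this hx

theorem hull_eq_on_hyperplane (l : E →L[ℝ] ℝ) {V : Set E} {c : ℝ} (h : ∀ v ∈ V, l v = c) :
    ∀ x ∈ convexHull ℝ V, l x = c := by
  intro x hx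
  have : convexHull ℝ V ⊆ {w | l w = c} :=
    convexHull_min h (convex_hyperplane ⟨fun a b => map_add l a b, fun r a => map_smul l r a⟩ c)
  exact this hx

theorem mem_hull_argmax {V : Finset E} (l : E →L[ℝ] ℝ) {c : ℝ}
    (hle : ∀ v ∈ V, l v ≤ c) {x : E} (hx : x ∈ convexHull ℝ (V : Set E)) (hxc : l x = c)
    [DecidablePred fun v : E => l v = c] :
    x ∈ convexHull ℝ ((V.filter fun v => l v = c) : Set E) := by
  obtain ⟨w, hw0, hw1, hsum⟩ := Finset.mem_convexHull'.1 hx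
  have key : ∀ v ∈ V, w v * l v = w v * c := by
    have hsum1 : ∑ v ∈ V, w v * l v = ∑ v ∈ V, w v * c := by
      have : l x = ∑ v ∈ V, w v * l v := by
        rw [← hsum, map_sum]
        simp [map_smul, smul_eq_mul]
      rw [← this, hxc, ← Finset.sum_mul, hw1, one_mul]
    intro v hv
    have h1 : ∀ v ∈ V, w v * l v ≤ w v * c := fun v hv =>
      mul_le_mul_of_nonneg_left (hle v hv) (hw0 v hv)
    exact (Finset.sum_eq_sum_iff_of_le h1).1 hsum1 v hv
  have hwz : ∀ v ∈ V, l v ≠ c → w v = 0 := by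
    intro v hv hvc
    by_contra hw
    exact hvc (mul_left_cancel₀ hw (key v hv))
  refine Finset.mem_convexHull'.2 ⟨w, fun y hy => hw0 y (Finset.mem_of_mem_filter y hy), ?_, ?_⟩
  · rw [Finset.sum_filter_of_ne (fun v hv hwv => by
      by_contra hc; exact hwv (hwz v hv hc))]
    exact hw1
  · rw [Finset.sum_filter_of_ne (fun v hv hwv => by
      by_contra hc
      exact hwv (by rw [hwz v hv hc, zero_smul])), hsum]

/-- An exposed set of a polytope is the hull of the set of vertices attaining the max. -/
theorem exposed_eq_hull_argmax (V : Finset E) (l : E →L[ℝ] ℝ) {c : ℝ}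
    (hle : ∀ v ∈ V, l v ≤ c) (hex : ∃ v ∈ V, l v = c)
    [DecidablePred fun v : E => l v = c] :
    {x ∈ convexHull ℝ (V : Set E) | ∀ y ∈ convexHull ℝ (V : Set E), l y ≤ l x} =
      convexHull ℝ ((V.filter fun v => l v = c) : Set E) := by
  obtain ⟨v₀, hv₀, hv₀c⟩ := hex
  apply Set.Subset.antisymm
  · rintro x ⟨hxP, hxmax⟩
    have hxc : l x = c := le_antisymm (hull_le_halfspace l hle x hxP)
      (hv₀c ▸ hxmax v₀ (subset_convexHull ℝ _ hv₀))
    exact mem_hull_argmax l hle hxP hxc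
  · intro x hx
    have hxc : l x = c := hull_eq_on_hyperplane (V := ((V.filter fun v => l v = c) : Set E)) l
      (fun v hv => by
        simp only [Finset.coe_filter, Set.mem_setOf_eq] at hv
        exact hv.2) x hx
    have hxP : x ∈ convexHull ℝ (V : Set E) :=
      convexHull_mono (by exact_mod_cast Finset.filter_subset _ V) hx
    exact ⟨hxP, fun y hy => hxc ▸ hull_le_halfspace l hle y hy⟩

theorem pdim_convexHull (s : Set E) : pdim (convexHull ℝ s) = pdim s := by
  unfold pdim
  rw [← direction_affineSpan, affineSpan_convexHull, direction_affineSpan]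

theorem pdim_mono [FiniteDimensional ℝ E] {s t : Set E} (h : s ⊆ t) : pdim s ≤ pdim t :=
  Submodule.finrank_mono (vectorSpan_mono ℝ h)

theorem pdim_empty : pdim (∅ : Set E) = 0 := by
  unfold pdim
  rw [vectorSpan_empty]
  simp

theorem pdim_finset_indep {S : Finset E} (hS : S.Nonempty)
    (h : AffineIndependent ℝ (Subtype.val : {x // x ∈ (S : Set E)} → E)) :
    pdim (S : Set E) = S.card - 1 := by
  unfold pdim
  have hcard : Fintype.card {x // x ∈ (S : Set E)} = (S.card - 1) + 1 := by
    have h1 : 1 ≤ S.card := Finset.card_pos.2 hS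
    have h2 : Fintype.card {x // x ∈ (S : Set E)} = S.card := by
      rw [Fintype.card_congr (Equiv.subtypeEquivRight (fun x => Finset.mem_coe))]
      exact Fintype.card_coe S
    omega
  have := h.finrank_vectorSpan hcard
  rwa [Subtype.range_val] at this

theorem le_pdim_of_li [FiniteDimensional ℝ E] {n : ℕ} (A : Set E) (f : Fin n → E)
    (hf : LinearIndependent ℝ f) (hmem : ∀ x, f x ∈ vectorSpan ℝ A) : n ≤ pdim A := by
  have h1 : Submodule.span ℝ (Set.range f) ≤ vectorSpan ℝ A :=
    Submodule.span_le.2 (by rintro _ ⟨x, rfl⟩; exact hmem x)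
  have h2 : Module.finrank ℝ (Submodule.span ℝ (Set.range f)) = n := by
    rw [finrank_span_eq_card hf, Fintype.card_fin]
  calc n = Module.finrank ℝ (Submodule.span ℝ (Set.range f)) := h2.symm
    _ ≤ pdim A := Submodule.finrank_mono h1

end Generic
section Classify

variable {E : Type*} [NormedAddCommGroup E] [NormedSpace ℝ E] [FiniteDimensional ℝ E]

theorem mem_hull_iff_mem {V S : Finset E}
    (vertsep : ∀ v ∈ V, ∃ l : E →L[ℝ] ℝ, ∀ w ∈ V, w ≠ v → l w < l v)
    (hSV : S ⊆ V) {v : E} (hv : v ∈ V) : v ∈ convexHull ℝ (S : Set E) ↔ v ∈ S := by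
  refine ⟨fun h => ?_, fun h => subset_convexHull ℝ _ h⟩
  by_contra hvS
  obtain ⟨l, hl⟩ := vertsep v hv
  have hSne : S.Nonempty := by
    rcases S.eq_empty_or_nonempty with rfl | h'
    · simp at h
    · exact h'
  obtain ⟨w₀, hw₀, hmax⟩ := S.exists_max_image l hSne
  have hvle : l v ≤ l w₀ := hull_le_halfspace l hmax v h
  have hlt : l w₀ < l v := hl w₀ (hSV hw₀) (fun he => hvS (he ▸ hw₀))
  linarith

open scoped Classical in
theorem skel_classify (k : ℕ) (V : Finset E) (Adm : Finset E → Prop)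
    (adm_sub : ∀ S, Adm S → S ⊆ V)
    (adm_empty : Adm ∅)
    (adm_indep : ∀ S, Adm S → AffineIndependent ℝ (Subtype.val : {x // x ∈ (S : Set E)} → E))
    (expose : ∀ S, Adm S → S.Nonempty → ∃ l : E →L[ℝ] ℝ,
        (∀ v ∈ V, l v ≤ 1) ∧ (∀ v ∈ V, (l v = 1 ↔ v ∈ S)))
    (classify : ∀ (l : E →L[ℝ] ℝ) (c : ℝ), (∀ v ∈ V, l v ≤ c) → (∃ v ∈ V, l v = c) →
        Adm (V.filter fun v => l v = c) ∨
          k < pdim (convexHull ℝ ((V.filter fun v => l v = c) : Set E)))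
    (vertsep : ∀ v ∈ V, ∃ l : E →L[ℝ] ℝ, ∀ w ∈ V, w ≠ v → l w < l v) :
    Nonempty (kSkel (convexHull ℝ (V : Set E)) k ≃o {S : Finset E // Adm S ∧ S.card ≤ k + 1}) := by
  classical
  set P := convexHull ℝ (V : Set E) with hP
  have repr : ∀ F : Set E, IsExposed ℝ P F → pdim F ≤ k →
      Adm (V.filter (· ∈ F)) ∧ F = convexHull ℝ ((V.filter (· ∈ F)) : Set E) ∧
        (V.filter (· ∈ F)).card ≤ k + 1 := by
    intro F hF hdim
    rcases F.eq_empty_or_nonempty with rfl | hFne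
    · simp only [Set.mem_empty_iff_false, Finset.filter_false]
      exact ⟨adm_empty, by simp, by simp⟩
    · obtain ⟨l, hlF⟩ := hF hFne
      have hVne : V.Nonempty := by
        rcases V.eq_empty_or_nonempty with h | h
        · exfalso
          obtain ⟨x, hx⟩ := hFne
          rw [hlF] at hx
          have := hx.1
          rw [hP, h] at this
          simp at this
        · exact h
      obtain ⟨v₀, hv₀, hmax⟩ := V.exists_max_image l hVne
      set c := l v₀ with hc
      set A := V.filter fun v => l v = c with hA
      have hex : ∃ v ∈ V, l v = c := ⟨v₀, hv₀, rfl⟩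
      have hFA : F = convexHull ℝ (A : Set E) := by
        rw [hlF, hP]; exact exposed_eq_hull_argmax V l hmax hex
      have hv₀A : v₀ ∈ A := by
        rw [hA, Finset.mem_filter]
        exact ⟨hv₀, rfl⟩
      have hAne : A.Nonempty := ⟨v₀, hv₀A⟩
      have hvset : V.filter (· ∈ F) = A := by
        ext v
        rw [Finset.mem_filter, hA, Finset.mem_filter]
        constructor
        · rintro ⟨hvV, hvF⟩
          have hAV : A ⊆ V := by rw [hA]; exact Finset.filter_subset _ _
          have h2 := (mem_hull_iff_mem vertsep hAV hvV).1 (by rw [← hFA]; exact hvF)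
          rw [hA, Finset.mem_filter] at h2
          exact ⟨hvV, h2.2⟩
        · rintro ⟨hvV, hvc⟩
          refine ⟨hvV, ?_⟩
          rw [hFA]
          refine subset_convexHull ℝ _ (Finset.mem_coe.2 ?_)
          rw [hA, Finset.mem_filter]
          exact ⟨hvV, hvc⟩
      have hAdm : Adm A := by
        rcases classify l c hmax hex with h | h
        · exact h
        · exfalso; rw [← hA, ← hFA] at h; omega
      have hpdimF : pdim F = A.card - 1 := by
        rw [hFA, pdim_convexHull]
        exact pdim_finset_indep hAne (adm_indep A hAdm)
      have hcard : A.card ≤ k + 1 := by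
        have h1 := Finset.card_pos.2 hAne
        omega
      rw [hvset]
      exact ⟨hAdm, hFA, hcard⟩
  have admface : ∀ S : Finset E, Adm S → S.card ≤ k + 1 →
      IsExposed ℝ P (convexHull ℝ (S : Set E)) ∧ pdim (convexHull ℝ (S : Set E)) ≤ k := by
    intro S hS hcard
    rcases S.eq_empty_or_nonempty with rfl | hSne
    · constructor
      · intro h
        exfalso
        simp at h
      · simp [pdim_empty]
    · obtain ⟨l, hl1, hliff⟩ := expose S hS hSne
      have hSV := adm_sub S hS
      have hfilter : V.filter (fun v => l v = 1) = S := by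
        ext v
        simp only [Finset.mem_filter]
        constructor
        · rintro ⟨hvV, hv1⟩
          exact (hliff v hvV).1 hv1
        · intro hvS
          exact ⟨hSV hvS, (hliff v (hSV hvS)).2 hvS⟩
      have hex : ∃ v ∈ V, l v = 1 := by
        obtain ⟨v, hv⟩ := hSne
        exact ⟨v, hSV hv, (hliff v (hSV hv)).2 hv⟩
      constructor
      · intro _
        refine ⟨l, ?_⟩
        rw [hP, exposed_eq_hull_argmax V l hl1 hex, hfilter]
      · rw [pdim_convexHull, pdim_finset_indep hSne (adm_indep S hS)]
        omega
  refine ⟨OrderIso.ofHomInv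
    (⟨fun F => ⟨V.filter (· ∈ F.1), (repr F.1 F.2.1 F.2.2).1, (repr F.1 F.2.1 F.2.2).2.2⟩, ?_⟩ :
      kSkel P k →o {S : Finset E // Adm S ∧ S.card ≤ k + 1})
    (⟨fun S => ⟨convexHull ℝ (S.1 : Set E), (admface S.1 S.2.1 S.2.2).1,
        (admface S.1 S.2.1 S.2.2).2⟩, ?_⟩ :
      {S : Finset E // Adm S ∧ S.card ≤ k + 1} →o kSkel P k)
    ?_ ?_⟩
  · -- monotone forward
    rintro ⟨F, hF⟩ ⟨F', hF'⟩ h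
    simp only [Subtype.mk_le_mk]
    intro v hv
    have := Finset.mem_filter.1 hv
    exact Finset.mem_filter.2 ⟨this.1, h this.2⟩
  · -- monotone backward
    rintro ⟨S, hS⟩ ⟨S', hS'⟩ h
    simp only [Subtype.mk_le_mk]
    exact convexHull_mono (by exact_mod_cast h)
  · -- right inverse : forward ∘ backward = id
    apply OrderHom.ext
    funext S
    apply Subtype.ext
    show V.filter (· ∈ convexHull ℝ (S.1 : Set E)) = S.1
    ext v
    simp only [Finset.mem_filter]
    constructor
    · rintro ⟨hvV, hvh⟩
      exact (mem_hull_iff_mem vertsep (adm_sub S.1 S.2.1) hvV).1 hvh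
    · intro hvS
      exact ⟨adm_sub S.1 S.2.1 hvS, subset_convexHull ℝ _ hvS⟩
  · -- left inverse : backward ∘ forward = id
    apply OrderHom.ext
    funext F
    apply Subtype.ext
    exact ((repr F.1 F.2.1 F.2.2).2.1).symm

end Classify
section Posets

theorem adm_poset_iso {E : Type*} [DecidableEq E] {ι : Type*} [DecidableEq ι]
    (φ : ι ↪ E) (τ : ι → ι) (m : ℕ) (Adm : Finset E → Prop)
    (hAdm : ∀ S, Adm S ↔ ∃ T : Finset ι, (∀ a ∈ T, τ a ∉ T) ∧ S = T.map φ) :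
    Nonempty ({S : Finset E // Adm S ∧ S.card ≤ m} ≃o
      {T : Finset ι // (∀ a ∈ T, τ a ∉ T) ∧ T.card ≤ m}) := by
  have hpre : ∀ S : Finset E, Adm S → (S.preimage φ φ.injective.injOn).map φ = S := by
    intro S hS
    obtain ⟨T, hT, rfl⟩ := (hAdm S).1 hS
    rw [Finset.preimage_map]
  have hanti : ∀ S : Finset E, Adm S →
      ∀ a ∈ S.preimage φ φ.injective.injOn, τ a ∉ S.preimage φ φ.injective.injOn := by
    intro S hS
    obtain ⟨T, hT, hEq⟩ := (hAdm S).1 hS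
    subst hEq
    rw [Finset.preimage_map]
    exact hT
  have hcard : ∀ S : Finset E, Adm S → (S.preimage φ φ.injective.injOn).card = S.card := by
    intro S hS
    conv_rhs => rw [← hpre S hS]
    rw [Finset.card_map]
  refine ⟨OrderIso.ofHomInv
    (⟨fun S => ⟨S.1.preimage φ φ.injective.injOn, hanti S.1 S.2.1,
        by rw [hcard S.1 S.2.1]; exact S.2.2⟩, ?_⟩ :
      {S : Finset E // Adm S ∧ S.card ≤ m} →o
        {T : Finset ι // (∀ a ∈ T, τ a ∉ T) ∧ T.card ≤ m})
    (⟨fun T => ⟨T.1.map φ, (hAdm _).2 ⟨T.1, T.2.1, rfl⟩, by rw [Finset.card_map]; exact T.2.2⟩,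
      ?_⟩ : _ →o _) ?_ ?_⟩
  · rintro ⟨S, hS⟩ ⟨S', hS'⟩ h
    simp only [Subtype.mk_le_mk]
    intro a ha
    rw [Finset.mem_preimage] at ha ⊢
    exact h ha
  · rintro ⟨T, hT⟩ ⟨T', hT'⟩ h
    simp only [Subtype.mk_le_mk]
    exact Finset.map_subset_map.2 h
  · apply OrderHom.ext
    funext T
    apply Subtype.ext
    show (T.1.map φ).preimage φ φ.injective.injOn = T.1
    rw [Finset.preimage_map]
  · apply OrderHom.ext
    funext S
    apply Subtype.ext
    exact hpre S.1 S.2.1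

theorem idx_transport {ι ι' : Type*} [DecidableEq ι] [DecidableEq ι'] (e : ι ≃ ι')
    (τ : ι → ι) (τ' : ι' → ι') (hcomm : ∀ a, e (τ a) = τ' (e a)) (m : ℕ) :
    Nonempty ({T : Finset ι // (∀ a ∈ T, τ a ∉ T) ∧ T.card ≤ m} ≃o
      {T : Finset ι' // (∀ a ∈ T, τ' a ∉ T) ∧ T.card ≤ m}) := by
  have hcomm' : ∀ a', e.symm (τ' a') = τ (e.symm a') := by
    intro a'
    have := hcomm (e.symm a')
    rw [e.apply_symm_apply] at this
    rw [← this, e.symm_apply_apply]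
  have hfwd : ∀ T : Finset ι, (∀ a ∈ T, τ a ∉ T) →
      ∀ a' ∈ T.map e.toEmbedding, τ' a' ∉ T.map e.toEmbedding := by
    intro T hT a' ha' hmem
    rw [Finset.mem_map_equiv] at ha' hmem
    rw [hcomm'] at hmem
    exact hT _ ha' hmem
  have hbwd : ∀ T : Finset ι', (∀ a ∈ T, τ' a ∉ T) →
      ∀ a ∈ T.map e.symm.toEmbedding, τ a ∉ T.map e.symm.toEmbedding := by
    intro T hT a ha hmem
    rw [Finset.mem_map_equiv, Equiv.symm_symm] at ha hmem
    rw [hcomm] at hmem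
    exact hT _ ha hmem
  refine ⟨OrderIso.ofHomInv
    (⟨fun T => ⟨T.1.map e.toEmbedding, hfwd T.1 T.2.1,
        by rw [Finset.card_map]; exact T.2.2⟩, ?_⟩ : _ →o _)
    (⟨fun T => ⟨T.1.map e.symm.toEmbedding, hbwd T.1 T.2.1,
        by rw [Finset.card_map]; exact T.2.2⟩, ?_⟩ : _ →o _) ?_ ?_⟩
  · rintro ⟨T, hT⟩ ⟨T', hT'⟩ h
    simp only [Subtype.mk_le_mk]
    exact Finset.map_subset_map.2 h
  · rintro ⟨T, hT⟩ ⟨T', hT'⟩ h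
    simp only [Subtype.mk_le_mk]
    exact Finset.map_subset_map.2 h
  · apply OrderHom.ext
    funext T
    apply Subtype.ext
    show (T.1.map e.symm.toEmbedding).map e.toEmbedding = T.1
    ext a
    simp [Finset.mem_map_equiv]
  · apply OrderHom.ext
    funext T
    apply Subtype.ext
    show (T.1.map e.toEmbedding).map e.symm.toEmbedding = T.1
    ext a
    simp [Finset.mem_map_equiv]

end Posets
section Helpers

theorem linearIndependent_of_dual {E ι : Type*} [AddCommGroup E] [Module ℝ E] (F : ι → E)
    (h : ∀ x₀ : ι, ∃ ℓ : E →ₗ[ℝ] ℝ, ℓ (F x₀) = 1 ∧ ∀ x, x ≠ x₀ → ℓ (F x) = 0) :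
    LinearIndependent ℝ F := by
  rw [linearIndependent_iff']
  intro s g hsum x₀ hx₀
  obtain ⟨ℓ, h1, h0⟩ := h x₀
  have h2 := congrArg ℓ hsum
  rw [map_sum, map_zero] at h2
  simp only [map_smul, smul_eq_mul] at h2
  rw [Finset.sum_eq_single x₀ (fun x hx hne => by rw [h0 x hne, mul_zero])
    (fun hx => absurd hx₀ hx)] at h2
  rw [h1, mul_one] at h2
  exact h2

theorem LinearIndependent.affineIndependent' {E ι : Type*} [AddCommGroup E] [Module ℝ E]
    {p : ι → E} (h : LinearIndependent ℝ p) : AffineIndependent ℝ p := by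
  rw [affineIndependent_iff]
  intro s w hw hsum i hi
  rw [linearIndependent_iff'] at h
  exact h s w hsum i hi

theorem affineIndependent_coe_map {E : Type*} [AddCommGroup E] [Module ℝ E] {ι : Type*}
    (φ : ι ↪ E) (T : Finset ι)
    (h : AffineIndependent ℝ (fun a : {a // a ∈ T} => φ a.1)) :
    AffineIndependent ℝ (Subtype.val : {x // x ∈ ((T.map φ : Finset E) : Set E)} → E) := by
  have hbij : Function.Bijective (fun a : {a // a ∈ T} =>
      (⟨φ a.1, Finset.mem_coe.2 (Finset.mem_map_of_mem φ a.2)⟩ :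
        {x // x ∈ ((T.map φ : Finset E) : Set E)})) := by
    constructor
    · intro a a' hh
      have := congrArg Subtype.val hh
      simp only at this
      exact Subtype.ext (φ.injective this)
    · rintro ⟨x, hx⟩
      simp only [Finset.mem_coe, Finset.mem_map] at hx
      obtain ⟨a, ha, rfl⟩ := hx
      exact ⟨⟨a, ha⟩, rfl⟩
  let e := Equiv.ofBijective _ hbij
  rw [← affineIndependent_equiv e]
  exact h

end Helpers

section CrossVerts

open scoped RealInnerProductSpace

/-- The vertices of the crosspolytope, indexed by `Fin m × Bool`. -/
def cVert (m : ℕ) : Fin m × Bool → Ept m :=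
  fun a => if a.2 then EuclideanSpace.single a.1 (1:ℝ) else -EuclideanSpace.single a.1 (1:ℝ)

/-- The antipodal involution on vertex indices. -/
def cFlip {m : ℕ} : Fin m × Bool → Fin m × Bool := fun a => (a.1, !a.2)

theorem cVert_cFlip {m : ℕ} (a : Fin m × Bool) : cVert m (cFlip a) = -cVert m a := by
  obtain ⟨i, b⟩ := a
  cases b <;> simp [cVert, cFlip]

theorem inner_single_single {m : ℕ} (i i' : Fin m) :
    ⟪(EuclideanSpace.single i (1:ℝ) : Ept m), EuclideanSpace.single i' (1:ℝ)⟫ =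
      if i = i' then 1 else 0 := by
  rw [EuclideanSpace.inner_single_left]
  simp only [map_one, one_mul, EuclideanSpace.single_apply]

theorem inner_cVert {m : ℕ} (a a' : Fin m × Bool) :
    ⟪cVert m a, cVert m a'⟫ =
      if a.1 = a'.1 then (if a.2 = a'.2 then 1 else -1) else 0 := by
  obtain ⟨i, b⟩ := a
  obtain ⟨i', b'⟩ := a'
  cases b <;> cases b' <;>
    simp [cVert, inner_neg_neg, inner_neg_left, inner_neg_right, inner_single_single] <;>
    by_cases h : i = i' <;> simp [h, eq_comm]

theorem cVert_injective (m : ℕ) : Function.Injective (cVert m) := by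
  intro a a' h
  have h2 : ⟪cVert m a, cVert m a'⟫ = (1:ℝ) := by
    rw [h]
    have := inner_cVert a' a'
    simpa using this
  rw [inner_cVert] at h2
  obtain ⟨i, b⟩ := a
  obtain ⟨i', b'⟩ := a'
  by_cases hi : i = i'
  · by_cases hb : b = b'
    · rw [hi, hb]
    · simp [hi, hb] at h2
      norm_num at h2
  · simp [hi] at h2

def cVertEmb (m : ℕ) : Fin m × Bool ↪ Ept m := ⟨cVert m, cVert_injective m⟩

def crossV (m : ℕ) : Finset (Ept m) := Finset.univ.map (cVertEmb m)

theorem cross_eq_hull (m : ℕ) : cross m = convexHull ℝ ((crossV m : Finset (Ept m)) : Set (Ept m)) := by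
  unfold cross
  congr 1
  ext x
  simp only [Set.mem_setOf_eq, crossV, Finset.coe_map, Finset.coe_univ, Set.image_univ,
    Set.mem_range]
  constructor
  · rintro ⟨i, h | h⟩
    · exact ⟨(i, true), by simp [cVertEmb, cVert, h]⟩
    · exact ⟨(i, false), by simp [cVertEmb, cVert, h]⟩
  · rintro ⟨⟨i, b⟩, rfl⟩
    cases b
    · exact ⟨i, Or.inr (by simp [cVertEmb, cVert])⟩
    · exact ⟨i, Or.inl (by simp [cVertEmb, cVert])⟩

/-- the weight vector exposing the face spanned by an antipode-free subset `T`. -/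
def cWeight (m : ℕ) [DecidableEq (Fin m × Bool)] (T : Finset (Fin m × Bool)) : Ept m :=
  (WithLp.equiv 2 (Fin m → ℝ)).symm
    (fun i => if (i, true) ∈ T then (1:ℝ) else if (i, false) ∈ T then -1 else 0)

theorem cWeight_apply {m : ℕ} [DecidableEq (Fin m × Bool)] (T : Finset (Fin m × Bool))
    (i : Fin m) :
    cWeight m T i = (if (i, true) ∈ T then (1:ℝ) else if (i, false) ∈ T then -1 else 0) := rfl

theorem inner_cWeight_single {m : ℕ} [DecidableEq (Fin m × Bool)] (T : Finset (Fin m × Bool))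
    (i : Fin m) :
    ⟪cWeight m T, (EuclideanSpace.single i (1:ℝ) : Ept m)⟫ = cWeight m T i := by
  rw [EuclideanSpace.inner_single_right]
  simp

theorem inner_cWeight_mem {m : ℕ} [DecidableEq (Fin m × Bool)] {T : Finset (Fin m × Bool)}
    (hT : ∀ a ∈ T, cFlip a ∉ T) {a : Fin m × Bool} (ha : a ∈ T) :
    ⟪cWeight m T, cVert m a⟫ = 1 := by
  obtain ⟨i, b⟩ := a
  cases b
  · have h1 : (i, true) ∉ T := hT (i, false) ha
    show ⟪cWeight m T, (if false then EuclideanSpace.single i (1:ℝ)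
      else -EuclideanSpace.single i (1:ℝ) : Ept m)⟫ = 1
    rw [if_neg (by simp), inner_neg_right, inner_cWeight_single, cWeight_apply]
    rw [if_neg h1, if_pos ha]
    norm_num
  · show ⟪cWeight m T, (if true then EuclideanSpace.single i (1:ℝ)
      else -EuclideanSpace.single i (1:ℝ) : Ept m)⟫ = 1
    rw [if_pos (by simp), inner_cWeight_single, cWeight_apply, if_pos ha]

theorem inner_cWeight_not_mem {m : ℕ} [DecidableEq (Fin m × Bool)] {T : Finset (Fin m × Bool)}
    {a : Fin m × Bool} (ha : a ∉ T) :
    ⟪cWeight m T, cVert m a⟫ ≤ 0 := by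
  obtain ⟨i, b⟩ := a
  cases b
  · show ⟪cWeight m T, (if false then EuclideanSpace.single i (1:ℝ)
      else -EuclideanSpace.single i (1:ℝ) : Ept m)⟫ ≤ 0
    rw [if_neg (by simp), inner_neg_right, inner_cWeight_single, cWeight_apply]
    split_ifs <;> norm_num
  · show ⟪cWeight m T, (if true then EuclideanSpace.single i (1:ℝ)
      else -EuclideanSpace.single i (1:ℝ) : Ept m)⟫ ≤ 0
    rw [if_pos (by simp), inner_cWeight_single, cWeight_apply]
    split_ifs <;> norm_num

/-- Linear independence of an antipode-free family of crosspolytope vertices. -/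
theorem linearIndependent_cVert {m : ℕ} (T : Finset (Fin m × Bool))
    (hT : ∀ a ∈ T, cFlip a ∉ T) :
    LinearIndependent ℝ (fun a : {a // a ∈ T} => cVert m a.1) := by
  apply linearIndependent_of_dual
  intro x₀
  refine ⟨(innerSL ℝ (cVert m x₀.1)).toLinearMap, ?_, ?_⟩
  · show ⟪cVert m x₀.1, cVert m x₀.1⟫ = 1
    rw [inner_cVert]
    simp
  · intro x hx
    show ⟪cVert m x₀.1, cVert m x.1⟫ = 0
    rw [inner_cVert]
    have hne : x₀.1 ≠ x.1 := fun h => hx (Subtype.ext h.symm)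
    by_cases hi : x₀.1.1 = x.1.1
    · have hb : x₀.1.2 ≠ x.1.2 := by
        intro hb
        exact hne (Prod.ext hi hb)
      -- then x.1 = cFlip x₀.1, both in T: contradiction
      exfalso
      have h2 : x.1.2 = !x₀.1.2 := by
        cases hx0 : x₀.1.2 <;> cases hx1 : x.1.2 <;> simp_all
      have : x.1 = cFlip x₀.1 := Prod.ext hi.symm h2
      exact hT x₀.1 x₀.2 (this ▸ x.2)
    · simp [hi]

end CrossVerts
section CrossSide

open scoped RealInnerProductSpace

theorem cVert_mem_crossV {m : ℕ} (a : Fin m × Bool) : cVert m a ∈ crossV m :=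
  Finset.mem_map_of_mem _ (Finset.mem_univ a)

theorem mem_crossV_iff {m : ℕ} {v : Ept m} : v ∈ crossV m ↔ ∃ a, cVert m a = v := by
  simp [crossV, Finset.mem_map, cVertEmb]

theorem cross_pdim_ge (m k : ℕ) (h : k + 1 ≤ m) :
    k < pdim ((crossV m : Finset (Ept m)) : Set (Ept m)) := by
  have hle : m ≤ pdim ((crossV m : Finset (Ept m)) : Set (Ept m)) := by
    apply le_pdim_of_li _ (fun i : Fin m => cVert m (i, true) - cVert m (i, false))
    · apply linearIndependent_of_dual
      intro i₀
      refine ⟨((1:ℝ)/2) • (innerSL ℝ (cVert m (i₀, true))).toLinearMap, ?_, ?_⟩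
      · show (1/2 : ℝ) * ⟪cVert m (i₀, true), cVert m (i₀, true) - cVert m (i₀, false)⟫ = 1
        rw [inner_sub_right, inner_cVert, inner_cVert]
        norm_num
      · intro i hne
        show (1/2 : ℝ) * ⟪cVert m (i₀, true), cVert m (i, true) - cVert m (i, false)⟫ = 0
        rw [inner_sub_right, inner_cVert, inner_cVert]
        have : i₀ ≠ i := fun hh => hne (by rw [hh])
        simp [this]
    · intro i
      rw [← vsub_eq_sub]
      exact vsub_mem_vectorSpan ℝ (cVert_mem_crossV (i, true)) (cVert_mem_crossV (i, false))
  omega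

open scoped Classical in
theorem cross_adm_sub (m : ℕ) : ∀ S : Finset (Ept m),
    (∃ T : Finset (Fin m × Bool), (∀ a ∈ T, cFlip a ∉ T) ∧ S = T.map (cVertEmb m)) →
    S ⊆ crossV m := by
  rintro S ⟨T, hT, rfl⟩
  exact Finset.map_subset_map.2 (Finset.subset_univ T)

theorem cross_expose (m : ℕ) : ∀ S : Finset (Ept m),
    (∃ T : Finset (Fin m × Bool), (∀ a ∈ T, cFlip a ∉ T) ∧ S = T.map (cVertEmb m)) →
    S.Nonempty → ∃ l : Ept m →L[ℝ] ℝ,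
      (∀ v ∈ crossV m, l v ≤ 1) ∧ (∀ v ∈ crossV m, (l v = 1 ↔ v ∈ S)) := by
  classical
  rintro S ⟨T, hT, rfl⟩ hSne
  refine ⟨innerSL ℝ (cWeight m T), ?_, ?_⟩
  · intro v hv
    obtain ⟨a, rfl⟩ := mem_crossV_iff.1 hv
    show ⟪cWeight m T, cVert m a⟫ ≤ 1
    by_cases ha : a ∈ T
    · rw [inner_cWeight_mem hT ha]
    · linarith [inner_cWeight_not_mem (T := T) ha]
  · intro v hv
    obtain ⟨a, rfl⟩ := mem_crossV_iff.1 hv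
    rw [show (cVert m a ∈ T.map (cVertEmb m)) ↔ a ∈ T from Finset.mem_map' (cVertEmb m)]
    constructor
    · intro h1
      by_contra ha
      have h2 := inner_cWeight_not_mem (T := T) ha
      have h3 : ⟪cWeight m T, cVert m a⟫ = 1 := h1
      linarith
    · intro ha
      exact inner_cWeight_mem hT ha

open scoped Classical in
theorem cross_classify (m k : ℕ) (hm : k + 1 ≤ m) :
    ∀ (l : Ept m →L[ℝ] ℝ) (c : ℝ), (∀ v ∈ crossV m, l v ≤ c) → (∃ v ∈ crossV m, l v = c) →
    (∃ T : Finset (Fin m × Bool), (∀ a ∈ T, cFlip a ∉ T) ∧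
        (crossV m).filter (fun v => l v = c) = T.map (cVertEmb m)) ∨
      k < pdim (convexHull ℝ (((crossV m).filter (fun v => l v = c) : Finset (Ept m)) : Set (Ept m))) := by
  intro l c hle hex
  set T : Finset (Fin m × Bool) := Finset.univ.filter (fun a => l (cVert m a) = c) with hTdef
  have hAT : (crossV m).filter (fun v => l v = c) = T.map (cVertEmb m) := by
    rw [crossV, Finset.filter_map]
    rfl
  by_cases hna : ∀ a ∈ T, cFlip a ∉ T
  · exact Or.inl ⟨T, hna, hAT⟩
  · right
    push_neg at hna
    obtain ⟨a, haT, hflip⟩ := hna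
    have ha1 : l (cVert m a) = c := (Finset.mem_filter.1 haT).2
    have ha2 : l (cVert m (cFlip a)) = c := (Finset.mem_filter.1 hflip).2
    rw [cVert_cFlip, map_neg] at ha2
    have hc0 : c = 0 := by linarith
    have hall : ∀ v ∈ crossV m, l v = c := by
      intro v hv
      obtain ⟨a', rfl⟩ := mem_crossV_iff.1 hv
      have h1 : l (cVert m a') ≤ 0 := hc0 ▸ hle _ hv
      have h2 : l (cVert m (cFlip a')) ≤ 0 := hc0 ▸ hle _ (cVert_mem_crossV (cFlip a'))
      rw [cVert_cFlip, map_neg] at h2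
      rw [hc0]
      linarith
    have hAeq : (crossV m).filter (fun v => l v = c) = crossV m :=
      Finset.filter_eq_self.2 hall
    rw [hAeq, pdim_convexHull]
    exact cross_pdim_ge m k hm

theorem cross_vertsep (m : ℕ) : ∀ v ∈ crossV m,
    ∃ l : Ept m →L[ℝ] ℝ, ∀ w ∈ crossV m, w ≠ v → l w < l v := by
  intro v hv
  obtain ⟨a, rfl⟩ := mem_crossV_iff.1 hv
  refine ⟨innerSL ℝ (cVert m a), ?_⟩
  intro w hw hne
  obtain ⟨a', rfl⟩ := mem_crossV_iff.1 hw
  have hne' : a' ≠ a := fun h => hne (by rw [h])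
  show ⟪cVert m a, cVert m a'⟫ < ⟪cVert m a, cVert m a⟫
  rw [inner_cVert, inner_cVert]
  simp only [if_pos rfl]
  by_cases hi : a.1 = a'.1
  · have hb : a.2 ≠ a'.2 := by
      intro hb
      exact hne' (Prod.ext hi.symm hb.symm)
    rw [if_pos hi, if_neg hb]
    norm_num
  · rw [if_neg hi]
    norm_num

open scoped Classical in
theorem cross_skel_iso (m k : ℕ) (hm : k + 1 ≤ m) :
    Nonempty (kSkel (cross m) k ≃o
      {T : Finset (Fin m × Bool) // (∀ a ∈ T, cFlip a ∉ T) ∧ T.card ≤ k + 1}) := by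
  classical
  rw [cross_eq_hull]
  obtain ⟨e1⟩ := skel_classify k (crossV m)
    (fun S => ∃ T : Finset (Fin m × Bool), (∀ a ∈ T, cFlip a ∉ T) ∧ S = T.map (cVertEmb m))
    (cross_adm_sub m) ⟨∅, by simp, by simp⟩
    (fun S hS => by
      obtain ⟨T, hT, rfl⟩ := hS
      exact affineIndependent_coe_map (cVertEmb m) T
        ((linearIndependent_cVert T hT).affineIndependent'))
    (cross_expose m) (cross_classify m k hm) (cross_vertsep m)
  obtain ⟨e2⟩ := adm_poset_iso (cVertEmb m) cFlip (k + 1)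
    (fun S => ∃ T : Finset (Fin m × Bool), (∀ a ∈ T, cFlip a ∉ T) ∧ S = T.map (cVertEmb m))
    (fun _ => Iff.rfl)
  exact ⟨e1.trans e2⟩

end CrossSide
section JoinSide

open scoped RealInnerProductSpace

variable (s : ℕ) (j : Fin s → ℕ)

abbrev EJ := (Π i : Fin s, Ept (j i)) × Ept s

abbrev jIdx := Σ i : Fin s, Fin (j i) × Bool

def jVert : jIdx s j → EJ s j := fun a =>
  (Function.update (0 : Π i, Ept (j i)) a.1 (cVert (j a.1) a.2),
    EuclideanSpace.single a.1 (1:ℝ))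

def jFlip : jIdx s j → jIdx s j := fun a => ⟨a.1, cFlip a.2⟩

theorem inner_single_one {n : ℕ} (v : Ept n) (i : Fin n) :
    ⟪v, EuclideanSpace.single i (1:ℝ)⟫ = v i := by
  rw [EuclideanSpace.inner_single_right]
  simp

theorem single_one_injective {n : ℕ} {i i' : Fin n}
    (h : EuclideanSpace.single i (1:ℝ) = EuclideanSpace.single i' (1:ℝ)) : i = i' := by
  have h2 := congrArg (fun v => ⟪(EuclideanSpace.single i (1:ℝ) : Ept n), v⟫) h
  rw [inner_single_single, inner_single_single] at h2
  simp at h2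
  exact h2

theorem jVert_injective : Function.Injective (jVert s j) := by
  rintro ⟨i, p⟩ ⟨i', p'⟩ h
  have h2 : EuclideanSpace.single i (1:ℝ) = EuclideanSpace.single i' (1:ℝ) :=
    congrArg Prod.snd h
  have hi : i = i' := single_one_injective h2
  subst hi
  have h1 := congrArg Prod.fst h
  have h3 := congrFun h1 i
  simp only [jVert, Function.update_self] at h3
  exact congrArg (fun q => (⟨i, q⟩ : jIdx s j)) (cVert_injective (j i) h3)

def jVertEmb : jIdx s j ↪ EJ s j := ⟨jVert s j, jVert_injective s j⟩

def jV : Finset (EJ s j) := Finset.univ.map (jVertEmb s j)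

theorem jVert_mem_jV (a : jIdx s j) : jVert s j a ∈ jV s j :=
  Finset.mem_map_of_mem _ (Finset.mem_univ a)

theorem mem_jV_iff {v : EJ s j} : v ∈ jV s j ↔ ∃ a, jVert s j a = v := by
  simp [jV, Finset.mem_map, jVertEmb]

/-- The per-block continuous linear functional. -/
def bfun (i : Fin s) (c : Ept (j i)) : EJ s j →L[ℝ] ℝ :=
  (innerSL ℝ c).comp ((ContinuousLinearMap.proj i).comp
    (ContinuousLinearMap.fst ℝ (Π i', Ept (j i')) (Ept s)))

/-- The functional reading off the second (join-coordinate) component. -/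
def zfun (w : Ept s) : EJ s j →L[ℝ] ℝ :=
  (innerSL ℝ w).comp (ContinuousLinearMap.snd ℝ (Π i', Ept (j i')) (Ept s))

theorem bfun_apply (i : Fin s) (c : Ept (j i)) (x : EJ s j) :
    bfun s j i c x = ⟪c, x.1 i⟫ := rfl

theorem zfun_apply (w : Ept s) (x : EJ s j) : zfun s j w x = ⟪w, x.2⟫ := rfl

theorem bfun_jVert_same (i : Fin s) (c : Ept (j i)) (p : Fin (j i) × Bool) :
    bfun s j i c (jVert s j ⟨i, p⟩) = ⟪c, cVert (j i) p⟫ := by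
  rw [bfun_apply]
  show ⟪c, Function.update (0 : Π i', Ept (j i')) i (cVert (j i) p) i⟫ = _
  rw [Function.update_self]

theorem bfun_jVert_ne (i : Fin s) (c : Ept (j i)) {i' : Fin s} (hne : i ≠ i')
    (p : Fin (j i') × Bool) : bfun s j i c (jVert s j ⟨i', p⟩) = 0 := by
  rw [bfun_apply]
  show ⟪c, Function.update (0 : Π i', Ept (j i')) i' (cVert (j i') p) i⟫ = 0
  rw [Function.update_of_ne hne]
  simp only [Pi.zero_apply]
  exact inner_zero_right c

theorem zfun_jVert (w : Ept s) (a : jIdx s j) : zfun s j w (jVert s j a) = w a.1 := by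
  rw [zfun_apply]
  exact inner_single_one w a.1

/-- `crossJoin` is the convex hull of the finite vertex set `jV`. -/
theorem crossJoin_eq_hull : crossJoin s j = convexHull ℝ ((jV s j : Finset (EJ s j)) : Set (EJ s j)) := by
  unfold crossJoin
  have haff : ∀ i : Fin s, ∃ g : Ept (j i) →ᵃ[ℝ] EJ s j, ∀ x : Ept (j i),
      g x = ((Function.update (0 : Π i', Ept (j i')) i x, EuclideanSpace.single i (1:ℝ)) :
        EJ s j) := by
    intro i
    refine ⟨⟨fun x => (Function.update 0 i x, EuclideanSpace.single i (1:ℝ)),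
      (LinearMap.single ℝ (fun i' => Ept (j i')) i).prod 0, ?_⟩, fun x => rfl⟩
    intro p v
    refine Prod.ext ?_ ?_
    · show (Pi.single (M := fun i' => Ept (j i')) i (v + p)) =
        (Pi.single (M := fun i' => Ept (j i')) i v) + (Pi.single (M := fun i' => Ept (j i')) i p)
      rw [Pi.single_add]
    · show EuclideanSpace.single i (1:ℝ) = (0 : Ept s) + EuclideanSpace.single i (1:ℝ)
      rw [zero_add]
  choose g hg using haff
  have himg : ∀ i : Fin s, (fun x : Ept (j i) =>
      ((Function.update (0 : Π i', Ept (j i')) i x, EuclideanSpace.single i (1:ℝ)) :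
        EJ s j)) '' cross (j i) = convexHull ℝ (⇑(g i) '' ((crossV (j i) : Finset (Ept (j i))) : Set (Ept (j i)))) := by
    intro i
    have h1 : (fun x : Ept (j i) =>
        ((Function.update (0 : Π i', Ept (j i')) i x, EuclideanSpace.single i (1:ℝ)) :
          EJ s j)) = ⇑(g i) := by
      funext x
      rw [hg]
    rw [h1, cross_eq_hull, AffineMap.image_convexHull]
  rw [funext fun i => himg i] at *
  · -- now hull of union of hulls
    have : (⋃ i, convexHull ℝ (⇑(g i) '' ((crossV (j i) : Finset (Ept (j i))) : Set (Ept (j i))))) =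
        (⋃ i, convexHull ℝ (⇑(g i) '' ((crossV (j i) : Finset (Ept (j i))) : Set (Ept (j i))))) := rfl
    apply Set.Subset.antisymm
    · apply convexHull_min
      · apply Set.iUnion_subset
        intro i
        apply convexHull_min
        · intro x hx
          obtain ⟨w, hw, rfl⟩ := hx
          apply subset_convexHull
          obtain ⟨p, rfl⟩ := mem_crossV_iff.1 (Finset.mem_coe.1 hw)
          have : g i (cVert (j i) p) = jVert s j ⟨i, p⟩ := by rw [hg]; rfl
          rw [this]
          exact Finset.mem_coe.2 (jVert_mem_jV s j ⟨i, p⟩)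
        · exact convex_convexHull ℝ _
      · exact convex_convexHull ℝ _
    · apply convexHull_mono
      intro x hx
      obtain ⟨a, rfl⟩ := mem_jV_iff s j |>.1 (Finset.mem_coe.1 hx)
      apply Set.mem_iUnion.2 ⟨a.1, ?_⟩
      apply subset_convexHull
      refine ⟨cVert (j a.1) a.2, ?_, ?_⟩
      · exact Finset.mem_coe.2 (cVert_mem_crossV a.2)
      · rw [hg]
        rfl

open scoped Classical in
/-- vertices of `T` in block `i`. -/
def Tblock (T : Finset (jIdx s j)) (i : Fin s) : Finset (Fin (j i) × Bool) :=
  Finset.univ.filter (fun p => (⟨i, p⟩ : jIdx s j) ∈ T)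

open scoped Classical in
theorem mem_Tblock {T : Finset (jIdx s j)} {i : Fin s} {p : Fin (j i) × Bool} :
    p ∈ Tblock s j T i ↔ (⟨i, p⟩ : jIdx s j) ∈ T := by
  simp [Tblock]

theorem Tblock_noAnti {T : Finset (jIdx s j)} (hT : ∀ a ∈ T, jFlip s j a ∉ T) (i : Fin s) :
    ∀ p ∈ Tblock s j T i, cFlip p ∉ Tblock s j T i := by
  intro p hp hfp
  exact hT ⟨i, p⟩ (mem_Tblock s j |>.1 hp) (mem_Tblock s j |>.1 hfp)

open scoped Classical in
def jWeight (T : Finset (jIdx s j)) : Ept s :=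
  (WithLp.equiv 2 (Fin s → ℝ)).symm
    (fun i => if (Tblock s j T i).Nonempty then (0:ℝ) else -1)

open scoped Classical in
theorem jWeight_apply (T : Finset (jIdx s j)) (i : Fin s) :
    jWeight s j T i = if (Tblock s j T i).Nonempty then (0:ℝ) else -1 := rfl

open scoped Classical in
def jExpFun (T : Finset (jIdx s j)) : EJ s j →L[ℝ] ℝ :=
  (∑ i, bfun s j i (cWeight (j i) (Tblock s j T i))) + zfun s j (jWeight s j T)

open scoped Classical in
theorem jExpFun_apply (T : Finset (jIdx s j)) (a : jIdx s j) :
    jExpFun s j T (jVert s j a) =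
      ⟪cWeight (j a.1) (Tblock s j T a.1), cVert (j a.1) a.2⟫ + jWeight s j T a.1 := by
  obtain ⟨i₀, p⟩ := a
  rw [jExpFun, ContinuousLinearMap.add_apply, ContinuousLinearMap.sum_apply]
  rw [Finset.sum_eq_single i₀ (fun i _ hne => bfun_jVert_ne s j i _ hne p)
    (fun h => absurd (Finset.mem_univ i₀) h)]
  rw [bfun_jVert_same, zfun_jVert]

open scoped Classical in
theorem join_expose (k : ℕ) : ∀ S : Finset (EJ s j),
    (∃ T : Finset (jIdx s j), (∀ a ∈ T, jFlip s j a ∉ T) ∧ S = T.map (jVertEmb s j)) →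
    S.Nonempty → ∃ l : EJ s j →L[ℝ] ℝ,
      (∀ v ∈ jV s j, l v ≤ 1) ∧ (∀ v ∈ jV s j, (l v = 1 ↔ v ∈ S)) := by
  rintro S ⟨T, hT, rfl⟩ hSne
  have hval : ∀ a : jIdx s j,
      (a ∈ T → jExpFun s j T (jVert s j a) = 1) ∧
      (a ∉ T → jExpFun s j T (jVert s j a) ≤ 0) := by
    intro a
    constructor
    · intro ha
      rw [jExpFun_apply]
      have hpb : a.2 ∈ Tblock s j T a.1 := by
        rw [mem_Tblock]
        exact (by cases a; exact ha)
      rw [inner_cWeight_mem (Tblock_noAnti s j hT a.1) hpb, jWeight_apply,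
        if_pos ⟨a.2, hpb⟩]
      norm_num
    · intro ha
      rw [jExpFun_apply]
      have hpb : a.2 ∉ Tblock s j T a.1 := by
        rw [mem_Tblock]
        exact (by cases a; exact ha)
      have h1 := inner_cWeight_not_mem (T := Tblock s j T a.1) hpb
      have h2 : jWeight s j T a.1 ≤ 0 := by
        rw [jWeight_apply]
        split_ifs <;> norm_num
      linarith
  refine ⟨jExpFun s j T, ?_, ?_⟩
  · intro v hv
    obtain ⟨a, rfl⟩ := mem_jV_iff s j |>.1 hv
    by_cases ha : a ∈ T
    · rw [(hval a).1 ha]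
    · linarith [(hval a).2 ha]
  · intro v hv
    obtain ⟨a, rfl⟩ := mem_jV_iff s j |>.1 hv
    rw [show (jVert s j a ∈ T.map (jVertEmb s j)) ↔ a ∈ T from Finset.mem_map' (jVertEmb s j)]
    constructor
    · intro h1
      by_contra ha
      have := (hval a).2 ha
      linarith
    · exact (hval a).1

open scoped Classical in
theorem join_classify (k : ℕ) (hj : ∀ i, k + 1 ≤ j i) :
    ∀ (l : EJ s j →L[ℝ] ℝ) (c : ℝ), (∀ v ∈ jV s j, l v ≤ c) → (∃ v ∈ jV s j, l v = c) →
    (∃ T : Finset (jIdx s j), (∀ a ∈ T, jFlip s j a ∉ T) ∧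
        (jV s j).filter (fun v => l v = c) = T.map (jVertEmb s j)) ∨
      k < pdim (convexHull ℝ
        (((jV s j).filter (fun v => l v = c) : Finset (EJ s j)) : Set (EJ s j))) := by
  intro l c hle hex
  set T : Finset (jIdx s j) := Finset.univ.filter (fun a => l (jVert s j a) = c) with hTdef
  have hAT : (jV s j).filter (fun v => l v = c) = T.map (jVertEmb s j) := by
    rw [jV, Finset.filter_map]
    rfl
  by_cases hna : ∀ a ∈ T, jFlip s j a ∉ T
  · exact Or.inl ⟨T, hna, hAT⟩
  · right
    push_neg at hna
    obtain ⟨⟨i₀, p⟩, haT, hflip⟩ := hna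
    -- affine decomposition of the vertices of block i₀
    set X : (Fin (j i₀) × Bool) → EJ s j :=
      fun q => ((Function.update (0 : Π i', Ept (j i')) i₀ (cVert (j i₀) q), (0 : Ept s)) :
        EJ s j) with hX
    have hsplit : ∀ q, jVert s j ⟨i₀, q⟩ =
        X q + ((0 : Π i', Ept (j i')), EuclideanSpace.single i₀ (1:ℝ)) := by
      intro q
      refine Prod.ext ?_ ?_
      · exact (add_zero _).symm
      · exact (zero_add _).symm
    have hXneg : ∀ q, X (cFlip q) = -X q := by
      intro q
      refine Prod.ext ?_ ?_
      · show (Pi.single (M := fun i' => Ept (j i')) i₀ (cVert (j i₀) (cFlip q))) =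
          -(Pi.single (M := fun i' => Ept (j i')) i₀ (cVert (j i₀) q))
        rw [cVert_cFlip, Pi.single_neg]
      · exact (neg_zero).symm
    have hdecomp : ∀ q, l (jVert s j ⟨i₀, q⟩) =
        l (X q) + l ((0 : Π i', Ept (j i')), EuclideanSpace.single i₀ (1:ℝ)) := by
      intro q
      rw [hsplit q, map_add]
    have ha1 : l (jVert s j ⟨i₀, p⟩) = c := by
      have := (Finset.mem_filter.1 haT).2
      exact this
    have ha2 : l (jVert s j ⟨i₀, cFlip p⟩) = c := by
      have := (Finset.mem_filter.1 hflip).2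
      exact this
    rw [hdecomp] at ha1 ha2
    rw [hXneg, map_neg] at ha2
    have hBp : l (X p) = 0 := by linarith
    have hβ : l ((0 : Π i', Ept (j i')), EuclideanSpace.single i₀ (1:ℝ)) = c := by linarith
    have hall : ∀ q, (⟨i₀, q⟩ : jIdx s j) ∈ T := by
      intro q
      have h1 : l (jVert s j ⟨i₀, q⟩) ≤ c := hle _ (jVert_mem_jV s j _)
      have h2 : l (jVert s j ⟨i₀, cFlip q⟩) ≤ c := hle _ (jVert_mem_jV s j _)
      rw [hdecomp, hβ] at h1 h2
      rw [hXneg, map_neg] at h2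
      have hq0 : l (X q) = 0 := by linarith
      rw [hTdef, Finset.mem_filter]
      exact ⟨Finset.mem_univ _, by rw [hdecomp, hq0, hβ, zero_add]⟩
    -- big face: contains the whole block i₀
    have hmemA : ∀ q, jVert s j ⟨i₀, q⟩ ∈
        (((jV s j).filter (fun v => l v = c) : Finset (EJ s j)) : Set (EJ s j)) := by
      intro q
      refine Finset.mem_coe.2 (Finset.mem_filter.2 ⟨jVert_mem_jV s j _, ?_⟩)
      have := hall q
      rw [hTdef, Finset.mem_filter] at this
      exact this.2
    rw [pdim_convexHull]
    have hge : j i₀ ≤ pdim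
        (((jV s j).filter (fun v => l v = c) : Finset (EJ s j)) : Set (EJ s j)) := by
      apply le_pdim_of_li _ (fun x : Fin (j i₀) =>
        jVert s j ⟨i₀, (x, true)⟩ - jVert s j ⟨i₀, (x, false)⟩)
      · apply linearIndependent_of_dual
        intro x₀
        refine ⟨((1:ℝ)/2) • (bfun s j i₀ (EuclideanSpace.single x₀ (1:ℝ))).toLinearMap, ?_, ?_⟩
        · show (1/2 : ℝ) * (bfun s j i₀ (EuclideanSpace.single x₀ (1:ℝ))
            (jVert s j ⟨i₀, (x₀, true)⟩ - jVert s j ⟨i₀, (x₀, false)⟩)) = 1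
          rw [map_sub, bfun_jVert_same, bfun_jVert_same]
          have h1 : (EuclideanSpace.single x₀ (1:ℝ) : Ept (j i₀)) = cVert (j i₀) (x₀, true) := by
            simp [cVert]
          rw [h1, inner_cVert, inner_cVert]
          norm_num
        · intro x hne
          show (1/2 : ℝ) * (bfun s j i₀ (EuclideanSpace.single x₀ (1:ℝ))
            (jVert s j ⟨i₀, (x, true)⟩ - jVert s j ⟨i₀, (x, false)⟩)) = 0
          rw [map_sub, bfun_jVert_same, bfun_jVert_same]
          have h1 : (EuclideanSpace.single x₀ (1:ℝ) : Ept (j i₀)) = cVert (j i₀) (x₀, true) := by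
            simp [cVert]
          have hx : x₀ ≠ x := fun hh => hne (by rw [hh])
          rw [h1, inner_cVert, inner_cVert]
          simp [hx]
      · intro x
        rw [← vsub_eq_sub]
        exact vsub_mem_vectorSpan ℝ (hmemA (x, true)) (hmemA (x, false))
    have := hj i₀
    omega

theorem join_vertsep : ∀ v ∈ jV s j,
    ∃ l : EJ s j →L[ℝ] ℝ, ∀ w ∈ jV s j, w ≠ v → l w < l v := by
  intro v hv
  obtain ⟨⟨i₀, p⟩, rfl⟩ := mem_jV_iff s j |>.1 hv
  refine ⟨bfun s j i₀ (cVert (j i₀) p) + zfun s j (EuclideanSpace.single i₀ (1:ℝ)), ?_⟩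
  intro w hw hne
  obtain ⟨⟨i, q⟩, rfl⟩ := mem_jV_iff s j |>.1 hw
  have hRHS : (bfun s j i₀ (cVert (j i₀) p) + zfun s j (EuclideanSpace.single i₀ (1:ℝ)))
      (jVert s j ⟨i₀, p⟩) = 2 := by
    rw [ContinuousLinearMap.add_apply, bfun_jVert_same, zfun_jVert, inner_cVert]
    have hz : (EuclideanSpace.single i₀ (1:ℝ) : Ept s) i₀ = 1 := by
      simp [EuclideanSpace.single_apply]
    rw [hz]
    norm_num
  rw [hRHS, ContinuousLinearMap.add_apply, zfun_jVert]
  by_cases hi : i = i₀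
  · subst hi
    rw [bfun_jVert_same]
    have hq : q ≠ p := fun hq => hne (by rw [hq])
    have hin : ⟪cVert (j i) p, cVert (j i) q⟫ ≤ 0 := by
      rw [inner_cVert]
      by_cases hc : p.1 = q.1
      · have hb : p.2 ≠ q.2 := fun hb => hq (Prod.ext hc hb).symm
        rw [if_pos hc, if_neg hb]
        norm_num
      · rw [if_neg hc]
    have hz : (EuclideanSpace.single i (1:ℝ) : Ept s) i = 1 := by
      simp [EuclideanSpace.single_apply]
    rw [hz]
    linarith
  · rw [bfun_jVert_ne s j i₀ _ (fun hh => hi hh.symm)]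
    have hz : (EuclideanSpace.single i₀ (1:ℝ) : Ept s) i = 0 := by
      simp [EuclideanSpace.single_apply, hi]
    rw [hz]
    norm_num

theorem join_indep (T : Finset (jIdx s j)) (hT : ∀ a ∈ T, jFlip s j a ∉ T) :
    LinearIndependent ℝ (fun a : {a // a ∈ T} => jVert s j a.1) := by
  apply linearIndependent_of_dual
  intro x₀
  obtain ⟨⟨i₀, p₀⟩, hmem₀⟩ := x₀
  refine ⟨(bfun s j i₀ (cVert (j i₀) p₀)).toLinearMap, ?_, ?_⟩
  · show bfun s j i₀ (cVert (j i₀) p₀) (jVert s j ⟨i₀, p₀⟩) = 1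
    rw [bfun_jVert_same, inner_cVert]
    simp
  · rintro ⟨⟨i, p⟩, hmem⟩ hne
    show bfun s j i₀ (cVert (j i₀) p₀) (jVert s j ⟨i, p⟩) = 0
    by_cases hi : i = i₀
    · subst hi
      rw [bfun_jVert_same, inner_cVert]
      have hpp : p ≠ p₀ := by
        intro h
        exact hne (by subst h; rfl)
      by_cases hc : p₀.1 = p.1
      · have hb : p₀.2 ≠ p.2 := fun hb => hpp (Prod.ext hc hb).symm
        exfalso
        have h2 : p.2 = !p₀.2 := by
          cases h0 : p₀.2 <;> cases h1 : p.2 <;> simp_all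
        have : p = cFlip p₀ := Prod.ext hc.symm h2
        exact hT ⟨i, p₀⟩ hmem₀ (by rw [show jFlip s j ⟨i, p₀⟩ = ⟨i, cFlip p₀⟩ from rfl, ← this]; exact hmem)
      · rw [if_neg hc]
    · exact bfun_jVert_ne s j i₀ _ (fun hh => hi hh.symm) p

open scoped Classical in
theorem join_skel_iso (k : ℕ) (hj : ∀ i, k + 1 ≤ j i) :
    Nonempty (kSkel (crossJoin s j) k ≃o
      {T : Finset (jIdx s j) // (∀ a ∈ T, jFlip s j a ∉ T) ∧ T.card ≤ k + 1}) := by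
  classical
  rw [crossJoin_eq_hull]
  obtain ⟨e1⟩ := skel_classify k (jV s j)
    (fun S => ∃ T : Finset (jIdx s j), (∀ a ∈ T, jFlip s j a ∉ T) ∧ S = T.map (jVertEmb s j))
    (by rintro S ⟨T, hT, rfl⟩; exact Finset.map_subset_map.2 (Finset.subset_univ T))
    ⟨∅, by simp, by simp⟩
    (by
      rintro S ⟨T, hT, rfl⟩
      exact affineIndependent_coe_map (jVertEmb s j) T
        ((join_indep s j T hT).affineIndependent'))
    (join_expose s j k) (join_classify s j k hj) (join_vertsep s j)
  obtain ⟨e2⟩ := adm_poset_iso (jVertEmb s j) (jFlip s j) (k + 1)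
    (fun S => ∃ T : Finset (jIdx s j), (∀ a ∈ T, jFlip s j a ∉ T) ∧ S = T.map (jVertEmb s j))
    (fun _ => Iff.rfl)
  exact ⟨e1.trans e2⟩

end JoinSide
section Dimension

open scoped RealInnerProductSpace

theorem sum_smul_single {n : ℕ} (x : Ept n) :
    ∑ i, x i • (EuclideanSpace.single i (1:ℝ) : Ept n) = x := by
  ext i₀
  rw [WithLp.ofLp_sum, Finset.sum_apply]
  have : ∀ i, (x i • (EuclideanSpace.single i (1:ℝ) : Ept n)) i₀ =
      if i₀ = i then x i else 0 := by
    intro i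
    show x i * (EuclideanSpace.single i (1:ℝ)) i₀ = _
    rw [EuclideanSpace.single_apply]
    split_ifs <;> ring
  simp only [this]
  simp

variable (s : ℕ) (j : Fin s → ℕ)

/-- the linear functional summing the join coordinates. -/
def jtsum : EJ s j →ₗ[ℝ] ℝ where
  toFun x := ∑ i, x.2 i
  map_add' x y := by
    show ∑ i, (x.2 i + y.2 i) = _
    rw [Finset.sum_add_distrib]
  map_smul' c x := by
    show ∑ i, c * x.2 i = c * ∑ i, x.2 i
    rw [Finset.mul_sum]

theorem tsum_jVert (a : jIdx s j) : jtsum s j (jVert s j a) = 1 := by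
  show ∑ i, (EuclideanSpace.single a.1 (1:ℝ) : Ept s) i = 1
  have : ∀ i, (EuclideanSpace.single a.1 (1:ℝ) : Ept s) i = if i = a.1 then 1 else 0 :=
    fun i => EuclideanSpace.single_apply a.1 1 i
  simp only [this]
  simp

/-- The linear embedding of block `i` into the product. -/
def Jlin (i : Fin s) : Ept (j i) →ₗ[ℝ] EJ s j :=
  (LinearMap.single ℝ (fun i' => Ept (j i')) i).prod 0

theorem Jlin_apply (i : Fin s) (y : Ept (j i)) :
    Jlin s j i y = ((Pi.single i y : Π i', Ept (j i')), (0 : Ept s)) := rfl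

theorem Jlin_cVert_sub (i : Fin s) (x : Fin (j i)) :
    Jlin s j i (cVert (j i) (x, true) - cVert (j i) (x, false)) =
      jVert s j ⟨i, (x, true)⟩ - jVert s j ⟨i, (x, false)⟩ := by
  rw [map_sub]
  refine Prod.ext ?_ ?_
  · rfl
  · show (0 : Ept s) - 0 = EuclideanSpace.single i (1:ℝ) - EuclideanSpace.single i (1:ℝ)
    rw [sub_self, sub_self]

theorem hhor (i : Fin s) (y : Ept (j i)) :
    Jlin s j i y ∈ vectorSpan ℝ ((jV s j : Finset (EJ s j)) : Set (EJ s j)) := by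
  have hsingle : ∀ x : Fin (j i), Jlin s j i (EuclideanSpace.single x (1:ℝ)) ∈
      vectorSpan ℝ ((jV s j : Finset (EJ s j)) : Set (EJ s j)) := by
    intro x
    have h2 : cVert (j i) (x, true) - cVert (j i) (x, false) =
        (2:ℝ) • (EuclideanSpace.single x (1:ℝ) : Ept (j i)) := by
      show EuclideanSpace.single x (1:ℝ) - -EuclideanSpace.single x (1:ℝ) = _
      rw [sub_neg_eq_add, two_smul]
    have h3 : Jlin s j i (EuclideanSpace.single x (1:ℝ)) =
        ((1:ℝ)/2) • (jVert s j ⟨i, (x, true)⟩ - jVert s j ⟨i, (x, false)⟩) := by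
      rw [← Jlin_cVert_sub, h2, map_smul, smul_smul]
      norm_num
    rw [h3]
    refine Submodule.smul_mem _ _ ?_
    rw [← vsub_eq_sub]
    exact vsub_mem_vectorSpan ℝ (Finset.mem_coe.2 (jVert_mem_jV s j _))
      (Finset.mem_coe.2 (jVert_mem_jV s j _))
  have hy : y = ∑ x, y x • (EuclideanSpace.single x (1:ℝ) : Ept (j i)) :=
    (sum_smul_single y).symm
  rw [hy, map_sum]
  refine Submodule.sum_mem _ fun x _ => ?_
  rw [map_smul]
  exact Submodule.smul_mem _ _ (hsingle x)

theorem hvert (hs : 1 ≤ s) (hj0 : ∀ i, 1 ≤ j i) (i : Fin s) :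
    (((0 : Π i', Ept (j i')), EuclideanSpace.single i (1:ℝ) -
        EuclideanSpace.single (⟨0, hs⟩ : Fin s) (1:ℝ)) : EJ s j) ∈
      vectorSpan ℝ ((jV s j : Finset (EJ s j)) : Set (EJ s j)) := by
  set i₀ : Fin s := ⟨0, hs⟩
  set p : Fin (j i) × Bool := (⟨0, hj0 i⟩, true)
  set p₀ : Fin (j i₀) × Bool := (⟨0, hj0 i₀⟩, true)
  have hdec : (((0 : Π i', Ept (j i')), EuclideanSpace.single i (1:ℝ) -
      EuclideanSpace.single i₀ (1:ℝ)) : EJ s j) =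
      (jVert s j ⟨i, p⟩ - jVert s j ⟨i₀, p₀⟩) -
        (Jlin s j i (cVert (j i) p) - Jlin s j i₀ (cVert (j i₀) p₀)) := by
    refine Prod.ext ?_ ?_
    · show (0 : Π i', Ept (j i')) =
        (Pi.single i (cVert (j i) p) - Pi.single i₀ (cVert (j i₀) p₀)) -
          (Pi.single i (cVert (j i) p) - Pi.single i₀ (cVert (j i₀) p₀))
      rw [sub_self]
    · show EuclideanSpace.single i (1:ℝ) - EuclideanSpace.single i₀ (1:ℝ) =
        (EuclideanSpace.single i (1:ℝ) - EuclideanSpace.single i₀ (1:ℝ)) - ((0:Ept s) - 0)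
      rw [sub_zero, sub_zero]
  rw [hdec]
  refine Submodule.sub_mem _ ?_ (Submodule.sub_mem _ (hhor s j i _) (hhor s j i₀ _))
  rw [← vsub_eq_sub]
  exact vsub_mem_vectorSpan ℝ (Finset.mem_coe.2 (jVert_mem_jV s j _))
    (Finset.mem_coe.2 (jVert_mem_jV s j _))

theorem vectorSpan_jV (hs : 1 ≤ s) (hj0 : ∀ i, 1 ≤ j i) :
    vectorSpan ℝ ((jV s j : Finset (EJ s j)) : Set (EJ s j)) = LinearMap.ker (jtsum s j) := by
  apply le_antisymm
  · rw [vectorSpan, Submodule.span_le]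
    rintro x hx
    obtain ⟨u, hu, v, hv, rfl⟩ := hx
    obtain ⟨a, rfl⟩ := mem_jV_iff s j |>.1 (Finset.mem_coe.1 hu)
    obtain ⟨b, rfl⟩ := mem_jV_iff s j |>.1 (Finset.mem_coe.1 hv)
    simp only [SetLike.mem_coe, LinearMap.mem_ker, vsub_eq_sub, map_sub]
    rw [tsum_jVert, tsum_jVert, sub_self]
  · rintro ⟨y, z⟩ hx
    rw [LinearMap.mem_ker] at hx
    have hz : ∑ i, z i = 0 := hx
    set i₀ : Fin s := ⟨0, hs⟩
    have hY : ((y, (0 : Ept s)) : EJ s j) ∈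
        vectorSpan ℝ ((jV s j : Finset (EJ s j)) : Set (EJ s j)) := by
      have hydec : ((y, (0 : Ept s)) : EJ s j) = ∑ i, Jlin s j i (y i) := by
        refine Prod.ext ?_ ?_
        · rw [Prod.fst_sum]
          exact (Finset.univ_sum_single y).symm
        · rw [Prod.snd_sum]
          simp [Jlin_apply]
      rw [hydec]
      exact Submodule.sum_mem _ fun i _ => hhor s j i (y i)
    have hZ : (((0 : Π i', Ept (j i')), z) : EJ s j) ∈
        vectorSpan ℝ ((jV s j : Finset (EJ s j)) : Set (EJ s j)) := by
      have hzdec : (((0 : Π i', Ept (j i')), z) : EJ s j) =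
          ∑ i, z i • (((0 : Π i', Ept (j i')), EuclideanSpace.single i (1:ℝ) -
            EuclideanSpace.single i₀ (1:ℝ)) : EJ s j) := by
        refine Prod.ext ?_ ?_
        · rw [Prod.fst_sum]
          simp
        · rw [Prod.snd_sum]
          have hterm : ∀ i : Fin s, (z i • (((0 : Π i', Ept (j i')),
              EuclideanSpace.single i (1:ℝ) - EuclideanSpace.single i₀ (1:ℝ)) : EJ s j)).2 =
              z i • (EuclideanSpace.single i (1:ℝ) : Ept s) -
                z i • (EuclideanSpace.single i₀ (1:ℝ) : Ept s) := by
            intro i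
            show z i • ((EuclideanSpace.single i (1:ℝ) : Ept s) -
              EuclideanSpace.single i₀ (1:ℝ)) = _
            rw [smul_sub]
          rw [Finset.sum_congr rfl (fun i _ => hterm i), Finset.sum_sub_distrib,
            sum_smul_single z, ← Finset.sum_smul, hz, zero_smul, sub_zero]
      rw [hzdec]
      exact Submodule.sum_mem _ fun i _ =>
        Submodule.smul_mem _ _ (hvert s j hs hj0 i)
    have : ((y, z) : EJ s j) = (y, (0 : Ept s)) + ((0 : Π i', Ept (j i')), z) := by
      refine Prod.ext ?_ ?_
      · rw [Prod.fst_add]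
        exact (add_zero y).symm
      · rw [Prod.snd_add]
        exact (zero_add z).symm
    rw [this]
    exact Submodule.add_mem _ hY hZ

end Dimension
section Dimension2

variable (s : ℕ) (j : Fin s → ℕ)

theorem pdim_crossJoin (hs : 1 ≤ s) (hj0 : ∀ i, 1 ≤ j i) :
    pdim (crossJoin s j) = (∑ i, j i) + s - 1 := by
  rw [crossJoin_eq_hull, pdim_convexHull]
  unfold pdim
  rw [vectorSpan_jV s j hs hj0]
  have hsurj : Function.Surjective (jtsum s j) := by
    intro r
    refine ⟨((0 : Π i', Ept (j i')),
      (EuclideanSpace.single (⟨0, hs⟩ : Fin s) r : Ept s)), ?_⟩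
    show ∑ i, (EuclideanSpace.single (⟨0, hs⟩ : Fin s) r : Ept s) i = r
    have h1 : ∀ i, (EuclideanSpace.single (⟨0, hs⟩ : Fin s) r : Ept s) i =
        if i = (⟨0, hs⟩ : Fin s) then r else 0 :=
      fun i => EuclideanSpace.single_apply _ r i
    simp only [h1]
    simp
  have hrank := LinearMap.finrank_range_add_finrank_ker (jtsum s j)
  rw [LinearMap.range_eq_top.2 hsurj, finrank_top] at hrank
  have hE : Module.finrank ℝ (EJ s j) = (∑ i, j i) + s := by
    rw [Module.finrank_prod, Module.finrank_pi_fintype]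
    simp [finrank_euclideanSpace_fin]
  rw [hE] at hrank
  have hone : Module.finrank ℝ ℝ = 1 := Module.finrank_self ℝ
  rw [hone] at hrank
  rw [← hrank, Nat.add_sub_cancel_left]

end Dimension2
/-- if each `jᵢ ≥ k+1` and `d = Σ jᵢ`, the join of the crosspolytopes
`X_{jᵢ}` is a polytope of dimension `d + s - 1` whose `k`-skeleton is combinatorially
equivalent to that of the `d`-crosspolytope. -/
theorem cross_join_k_equiv (k s : ℕ) (hk : 1 ≤ k) (hs : 1 ≤ s) (j : Fin s → ℕ)
    (hj : ∀ i, k + 1 ≤ j i) (d : ℕ) (hd : d = ∑ i, j i) :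
    IsPolytope (crossJoin s j) ∧
    pdim (crossJoin s j) = d + s - 1 ∧
    kEquiv (crossJoin s j) (cross d) k := by
  have hj0 : ∀ i, 1 ≤ j i := fun i => le_trans (by omega) (hj i)
  refine ⟨⟨jV s j, crossJoin_eq_hull s j⟩, ?_, ?_⟩
  · rw [pdim_crossJoin s j hs hj0, hd]
  · have hd' : k + 1 ≤ d := by
      have h0 : j ⟨0, hs⟩ ≤ ∑ i, j i :=
        Finset.single_le_sum (fun i _ => Nat.zero_le _) (Finset.mem_univ _)
      have h1 := hj ⟨0, hs⟩
      omega
    obtain ⟨e1⟩ := join_skel_iso s j k hj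
    obtain ⟨e2⟩ := cross_skel_iso d k hd'
    have hcard : Fintype.card (Σ i : Fin s, Fin (j i)) = d := by
      simp [Fintype.card_sigma, hd]
    let eFin : (Σ i : Fin s, Fin (j i)) ≃ Fin d := Fintype.equivFinOfCardEq hcard
    let e : jIdx s j ≃ (Fin d × Bool) :=
      (Equiv.sigmaProdDistrib (fun i => Fin (j i)) Bool).symm.trans
        (Equiv.prodCongr eFin (Equiv.refl Bool))
    have hcomm : ∀ a : jIdx s j, e (jFlip s j a) = cFlip (e a) := by
      rintro ⟨i, x, b⟩
      rfl
    obtain ⟨e3⟩ := idx_transport e (jFlip s j) (cFlip (m := d)) hcomm (k + 1)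
    exact ⟨e1.trans (e3.trans e2.symm)⟩

end
end

section
/- The complete multipartite graph K_{n_1,...,n_t} with t > 1 and each n_i ∈ {1,2} is the graph of a convex polytope if and only if the multiset {n_1,...,n_t} is neither {1,2} nor {1,1,2}. -/
open Set

noncomputable section

variable {V : Type*}

/-- Helper: exposing a sub-hull via a linear functional with strict inequality off `T`. -/
lemma expose_conv {N : ℕ} {S T : Finset (Ept N)} (hTS : T ⊆ S) (hT : T.Nonempty)
    (f : Ept N →L[ℝ] ℝ) (c : ℝ) (hfT : ∀ v ∈ T, f v = c) (hfS : ∀ v ∈ S, v ∉ T → f v < c) :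
    IsExposed ℝ (convexHull ℝ (S : Set (Ept N))) (convexHull ℝ (T : Set (Ept N))) := by
  intro _
  refine ⟨f, ?_⟩
  obtain ⟨t0, ht0⟩ := hT
  have hfle : ∀ y ∈ convexHull ℝ (S : Set (Ept N)), f y ≤ c := by
    intro y hy
    have : convexHull ℝ (S : Set (Ept N)) ⊆ {z | f z ≤ c} := by
      apply convexHull_min _ (convex_halfSpace_le (f.toLinearMap.isLinear) c)
      intro v hv
      by_cases hvT : v ∈ T
      · exact le_of_eq (hfT v hvT)
      · exact le_of_lt (hfS v (by exact_mod_cast hv) hvT)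
    exact this hy
  have hfeq : ∀ x ∈ convexHull ℝ (T : Set (Ept N)), f x = c := by
    intro x hx
    have : convexHull ℝ (T : Set (Ept N)) ⊆ {z | f z = c} := by
      apply convexHull_min _ (convex_hyperplane (f.toLinearMap.isLinear) c)
      intro v hv
      exact hfT v (by exact_mod_cast hv)
    exact this hx
  apply Set.Subset.antisymm
  · intro x hx
    refine ⟨convexHull_mono (by exact_mod_cast hTS) hx, ?_⟩
    intro y hy
    rw [hfeq x hx]
    exact hfle y hy
  · rintro x ⟨hxS, hmax⟩
    have hxc : f x = c := by
      refine le_antisymm (hfle x hxS) ?_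
      have ht0S : (t0 : Ept N) ∈ convexHull ℝ (S : Set (Ept N)) :=
        subset_convexHull ℝ _ (by exact_mod_cast hTS ht0)
      calc c = f t0 := (hfT t0 ht0).symm
        _ ≤ f x := hmax t0 ht0S
    rw [mem_convexHull_iff_exists_fintype] at hxS
    obtain ⟨ι, _, w, z, hw0, hw1, hz, hxsum⟩ := hxS
    classical
    have hsupp : ∀ i, w i ≠ 0 → z i ∈ T := by
      intro i hwi
      by_contra hzi
      have hlt : ∑ j, w j * f (z j) < ∑ j, w j * c := by
        apply Finset.sum_lt_sum
        · intro j _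
          by_cases hj : z j ∈ T
          · rw [hfT _ hj]
          · exact mul_le_mul_of_nonneg_left (le_of_lt (hfS _ (hz j) hj)) (hw0 j)
        · exact ⟨i, Finset.mem_univ i, by
            have := hfS _ (hz i) hzi
            exact mul_lt_mul_of_pos_left this (lt_of_le_of_ne (hw0 i) (Ne.symm hwi))⟩
      have hfx : f x = ∑ j, w j * f (z j) := by
        rw [← hxsum, map_sum]
        simp [map_smul, smul_eq_mul]
      rw [← hfx, hxc] at hlt
      have : ∑ j, w j * c = c := by rw [← Finset.sum_mul, hw1, one_mul]
      rw [this] at hlt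
      exact lt_irrefl _ hlt
    set z' : ι → Ept N := fun i => if w i = 0 then (t0 : Ept N) else z i with hz'
    have hxsum' : ∑ i, w i • z' i = x := by
      rw [← hxsum]
      apply Finset.sum_congr rfl
      intro i _
      by_cases hwi : w i = 0
      · simp [hz', hwi]
      · simp [hz', hwi]
    exact mem_convexHull_of_exists_fintype w z' hw0 hw1
      (fun i => by
        by_cases hwi : w i = 0
        · simp only [hz', hwi, if_true]; exact_mod_cast ht0
        · simp only [hz', hwi, if_false]; exact_mod_cast hsupp i hwi) hxsum'

lemma extreme_of_mem_subset {E : Type*} [AddCommGroup E] [Module ℝ E]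
    {P s : Set E} {p : E} (hp : p ∈ P.extremePoints ℝ) (hs : s ⊆ P) (hps : p ∈ s) :
    p ∈ s.extremePoints ℝ :=
  ⟨hps, fun x₁ h₁ x₂ h₂ hseg => hp.2 (hs h₁) (hs h₂) hseg⟩

/-- H1 : an extreme point of `P` lying in the hull of a subset of `P` belongs to that subset. -/
lemma extreme_mem_of_mem_hull {E : Type*} [AddCommGroup E] [Module ℝ E]
    {P s : Set E} {p : E} (hP : Convex ℝ P) (hp : p ∈ P.extremePoints ℝ) (hs : s ⊆ P)
    (hmem : p ∈ convexHull ℝ s) : p ∈ s :=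
  extremePoints_convexHull_subset
    (extreme_of_mem_subset hp (convexHull_min hs hP) hmem)

/-- Every exposed point of a polytope is one of the defining points. -/
lemma exposed_mem_finset {N : ℕ} (S : Finset (Ept N)) {x : Ept N}
    (h : IsExposed ℝ (convexHull ℝ (S : Set (Ept N))) {x}) : x ∈ S := by
  have := mem_exposedPoints_iff_exposed_singleton.2 h
  exact_mod_cast extremePoints_convexHull_subset (exposedPoints_subset_extremePoints this)

/-- Every extreme point of a polytope is exposed. -/
lemma extreme_is_exposed {N : ℕ} (S : Finset (Ept N)) {x : Ept N}
    (hx : x ∈ (convexHull ℝ (S : Set (Ept N))).extremePoints ℝ) :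
    IsExposed ℝ (convexHull ℝ (S : Set (Ept N))) {x} := by
  classical
  have hxS : x ∈ S := by exact_mod_cast extremePoints_convexHull_subset hx
  have hnot : x ∉ convexHull ℝ ((S.erase x : Finset (Ept N)) : Set (Ept N)) := by
    intro hmem
    have : x ∈ ((S.erase x : Finset (Ept N)) : Set (Ept N)) :=
      extreme_mem_of_mem_hull (convex_convexHull ℝ _) hx
        (by
          intro v hv
          exact subset_convexHull ℝ _ (by
            simp only [Finset.coe_erase, Set.mem_diff] at hv
            exact_mod_cast hv.1)) hmem
    simp at this
  obtain ⟨f, u, hfu, hux⟩ := geometric_hahn_banach_closed_point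
    (convex_convexHull ℝ _) ((Set.Finite.isCompact_convexHull (𝕜 := ℝ) (S.erase x).finite_toSet).isClosed)
    hnot
  have hexp := expose_conv (S := S) (T := {x}) (by simpa using hxS) ⟨x, Finset.mem_singleton_self x⟩
    f (f x) (by simp) ?_
  · simpa using hexp
  · intro v hv hvx
    have : v ∈ S.erase x := Finset.mem_erase.2 ⟨by simpa using hvx, hv⟩
    calc f v < u := hfu v (subset_convexHull ℝ _ (by exact_mod_cast this))
      _ < f x := hux


/-- A continuous linear functional with prescribed values on a linearly independent family. -/
lemma exists_clm_eq {N : ℕ} {ι : Type*} {v : ι → Ept N}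
    (hv : LinearIndependent ℝ v) (c : ι → ℝ) :
    ∃ f : Ept N →L[ℝ] ℝ, ∀ i, f (v i) = c i := by
  classical
  set K := Submodule.span ℝ (Set.range v) with hK
  have : FiniteDimensional ℝ (Ept N) := by infer_instance
  have hKfd : FiniteDimensional ℝ K := inferInstance
  let b : Module.Basis ι ℝ K := Module.Basis.span hv
  let g : K →ₗ[ℝ] ℝ := b.constr ℝ c
  let f : Ept N →L[ℝ] ℝ :=
    (LinearMap.toContinuousLinearMap g).comp (Submodule.orthogonalProjection K : Ept N →L[ℝ] K)
  refine ⟨f, fun i => ?_⟩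
  have hmem : v i ∈ K := Submodule.subset_span (Set.mem_range_self i)
  have hproj : Submodule.orthogonalProjection K (v i) = ⟨v i, hmem⟩ := by
    exact_mod_cast Submodule.orthogonalProjection_mem_subspace_eq_self (⟨v i, hmem⟩ : K)
  have hb : (⟨v i, hmem⟩ : K) = b i := by
    apply Subtype.ext
    exact congrArg Subtype.val (Module.Basis.span_apply hv i).symm
  show g (Submodule.orthogonalProjection K (v i)) = c i
  rw [hproj, hb]
  exact b.constr_basis ℝ c i

/-- H2 : clash between an exposed face and a segment meeting it. -/
lemma segment_clash {N : ℕ} {P F : Set (Ept N)} (hF : IsExposed ℝ P F)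
    {p q z : Ept N} (hp : p ∈ P) (hq : q ∈ P) (hpF : p ∉ F) (hqF : q ∉ F)
    (hzF : z ∈ F) (hzseg : z ∈ segment ℝ p q) : False := by
  by_cases hzp : z = p
  · exact hpF (hzp ▸ hzF)
  by_cases hzq : z = q
  · exact hqF (hzq ▸ hzF)
  have hopen : z ∈ openSegment ℝ p q :=
    mem_openSegment_of_ne_left_right (Ne.symm hzp) (Ne.symm hzq) hzseg
  exact hpF (hF.isExtreme.2 hp hq hzF hopen)
lemma exposed_not_in_segment {N : ℕ} {P : Set (Ept N)} {a u v : Ept N}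
    (ha : a ∈ P.extremePoints ℝ) (hu : u ∈ P) (hv : v ∈ P)
    (hau : a ≠ u) (hav : a ≠ v) (h : a ∈ segment ℝ u v) : False := by
  have hopen : a ∈ openSegment ℝ u v :=
    mem_openSegment_of_ne_left_right (Ne.symm hau) (Ne.symm hav) h
  rcases ha.2 hu hv hopen with ⟨rfl, -⟩
  exact hau rfl

/-- A polytope is the hull of any finite superset of its exposed points contained in it. -/
lemma hull_exposed_finite {N : ℕ} (S : Finset (Ept N)) {P : Set (Ept N)}
    (hP : P = convexHull ℝ (S : Set (Ept N))) {M : Set (Ept N)} (hMfin : M.Finite)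
    (hM : ∀ y, IsExposed ℝ P {y} → y ∈ M) (hMP : M ⊆ P) : P = convexHull ℝ M := by
  have hPconv : Convex ℝ P := hP ▸ convex_convexHull ℝ _
  have hPcomp : IsCompact P := hP ▸ Set.Finite.isCompact_convexHull (𝕜 := ℝ) S.finite_toSet
  have hEM : P.extremePoints ℝ ⊆ M := by
    intro e he
    exact hM e (by rw [hP]; exact extreme_is_exposed S (hP ▸ he))
  have hKM : closure (convexHull ℝ (P.extremePoints ℝ)) = P :=
    closure_convexHull_extremePoints hPcomp hPconv
  apply Set.Subset.antisymm
  · calc P = closure (convexHull ℝ (P.extremePoints ℝ)) := hKM.symm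
      _ ⊆ closure (convexHull ℝ M) := closure_mono (convexHull_mono hEM)
      _ = convexHull ℝ M := IsClosed.closure_eq ((hMfin.isCompact_convexHull ℝ).isClosed)
  · exact convexHull_min hMP hPconv
lemma no_K12 {N : ℕ} (S : Finset (Ept N)) {P : Set (Ept N)}
    (hPS : P = convexHull ℝ (S : Set (Ept N)))
    {x a b : Ept N}
    (hx : IsExposed ℝ P {x}) (ha : IsExposed ℝ P {a}) (hb : IsExposed ℝ P {b})
    (hxa : x ≠ a) (hxb : x ≠ b) (hab : a ≠ b)
    (hall : ∀ y : Ept N, IsExposed ℝ P {y} → y = x ∨ y = a ∨ y = b)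
    (hnab : ¬ IsExposed ℝ P (segment ℝ a b)) : False := by
  classical
  have hPconv : Convex ℝ P := hPS ▸ convex_convexHull ℝ _
  have hxP : x ∈ P := hx.subset rfl
  have haP : a ∈ P := ha.subset rfl
  have hbP : b ∈ P := hb.subset rfl
  have hxE : x ∈ P.extremePoints ℝ :=
    exposedPoints_subset_extremePoints (mem_exposedPoints_iff_exposed_singleton.2 hx)
  have haE : a ∈ P.extremePoints ℝ :=
    exposedPoints_subset_extremePoints (mem_exposedPoints_iff_exposed_singleton.2 ha)
  have hbE : b ∈ P.extremePoints ℝ :=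
    exposedPoints_subset_extremePoints (mem_exposedPoints_iff_exposed_singleton.2 hb)
  set p : Fin 3 → Ept N := ![a, b, x] with hp
  have hp0 : p 0 = a := rfl
  have hp1 : p 1 = b := rfl
  have hp2 : p 2 = x := rfl
  by_cases hAI : AffineIndependent ℝ p
  · -- triangle : expose the segment [a,b]
    rw [affineIndependent_iff_linearIndependent_vsub ℝ p 0] at hAI
    obtain ⟨f, hf⟩ := exists_clm_eq (v := fun i : {i : Fin 3 // i ≠ 0} => p i -ᵥ p 0) hAI
      (fun i => if (i : Fin 3) = 1 then 0 else -1)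
    have hfb : f (b - a) = 0 := by
      have := hf ⟨1, by decide⟩
      simpa [hp0, hp1] using this
    have hfx : f (x - a) = -1 := by
      have := hf ⟨2, by decide⟩
      simpa [hp0, hp2] using this
    have hfb' : f b = f a := by
      have := hfb; rw [map_sub] at this; linarith
    have hfx' : f x = f a - 1 := by
      have := hfx; rw [map_sub] at this; linarith
    -- P is the hull of {x, a, b}
    have hPM : P = convexHull ℝ (({x, a, b} : Finset (Ept N)) : Set (Ept N)) := by
      have : P = convexHull ℝ ({x, a, b} : Set (Ept N)) := by
        apply hull_exposed_finite S hPS (Set.toFinite _)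
        · intro y hy
          rcases hall y hy with rfl | rfl | rfl <;> simp
        · intro z hz
          rcases hz with rfl | rfl | rfl
          · exact hxP
          · exact haP
          · exact hbP
      simpa using this
    have hexp : IsExposed ℝ P (convexHull ℝ (({a, b} : Finset (Ept N)) : Set (Ept N))) := by
      rw [hPM]
      apply expose_conv (S := {x, a, b}) (T := {a, b}) (by intro v hv; simp at hv ⊢; tauto)
        ⟨a, by simp⟩ f (f a)
      · intro v hv
        simp at hv
        rcases hv with rfl | rfl
        · rfl
        · exact hfb'
      · intro v hv hvT
        simp at hv hvT
        have : v = x := by tauto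
        subst this
        rw [hfx']; linarith
    rw [show (({a, b} : Finset (Ept N)) : Set (Ept N)) = {a, b} by simp,
      convexHull_pair] at hexp
    exact hnab hexp
  · -- degenerate : Radon partition
    obtain ⟨I, z, hzmem⟩ := Convex.radon_partition (𝕜 := ℝ) hAI
    obtain ⟨hzI, hzIc⟩ := hzmem
    have hpoint : ∀ u v w : Ept N, u ∈ P.extremePoints ℝ → v ∈ P → w ∈ P →
        u ≠ v → u ≠ w → u ∈ convexHull ℝ ({v, w} : Set (Ept N)) → False := by
      intro u v w hu hv hw huv huw hmem
      have : u ∈ ({v, w} : Set (Ept N)) := by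
        apply extreme_mem_of_mem_hull hPconv hu _ hmem
        intro z hz
        rcases hz with rfl | rfl
        · exact hv
        · exact hw
      rcases this with rfl | rfl
      · exact huv rfl
      · exact huw rfl
    by_cases h0 : (0 : Fin 3) ∈ I <;> by_cases h1 : (1 : Fin 3) ∈ I <;>
      by_cases h2 : (2 : Fin 3) ∈ I
    · -- I = univ
      have hIc : Iᶜ = (∅ : Set (Fin 3)) := by
        ext i; fin_cases i <;> simp [h0, h1, h2]
      rw [hIc] at hzIc; simp at hzIc
    · -- I = {0,1} : a,b vs x
      have hI : I = ({0, 1} : Set (Fin 3)) := by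
        ext i; fin_cases i <;> simp [h0, h1, h2]
      have hIc : Iᶜ = ({2} : Set (Fin 3)) := by
        ext i; fin_cases i <;> simp [h0, h1, h2]
      rw [hI, Set.image_insert_eq, Set.image_singleton, hp0, hp1] at hzI
      rw [hIc, Set.image_singleton, hp2, convexHull_singleton, Set.mem_singleton_iff] at hzIc
      exact hpoint x a b hxE haP hbP hxa hxb (hzIc ▸ hzI)
    · -- I = {0,2} : a,x vs b
      have hI : I = ({0, 2} : Set (Fin 3)) := by
        ext i; fin_cases i <;> simp [h0, h1, h2]
      have hIc : Iᶜ = ({1} : Set (Fin 3)) := by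
        ext i; fin_cases i <;> simp [h0, h1, h2]
      rw [hI, Set.image_insert_eq, Set.image_singleton, hp0, hp2] at hzI
      rw [hIc, Set.image_singleton, hp1, convexHull_singleton, Set.mem_singleton_iff] at hzIc
      exact hpoint b a x hbE haP hxP (Ne.symm hab) (Ne.symm hxb) (hzIc ▸ hzI)
    · -- I = {0} : a vs b,x
      have hI : I = ({0} : Set (Fin 3)) := by
        ext i; fin_cases i <;> simp [h0, h1, h2]
      have hIc : Iᶜ = ({1, 2} : Set (Fin 3)) := by
        ext i; fin_cases i <;> simp [h0, h1, h2]
      rw [hI, Set.image_singleton, hp0, convexHull_singleton, Set.mem_singleton_iff] at hzI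
      rw [hIc, Set.image_insert_eq, Set.image_singleton, hp1, hp2] at hzIc
      exact hpoint a b x haE hbP hxP hab (Ne.symm hxa) (hzI ▸ hzIc)
    · -- I = {1,2} : b,x vs a
      have hI : I = ({1, 2} : Set (Fin 3)) := by
        ext i; fin_cases i <;> simp [h0, h1, h2]
      have hIc : Iᶜ = ({0} : Set (Fin 3)) := by
        ext i; fin_cases i <;> simp [h0, h1, h2]
      rw [hI, Set.image_insert_eq, Set.image_singleton, hp1, hp2] at hzI
      rw [hIc, Set.image_singleton, hp0, convexHull_singleton, Set.mem_singleton_iff] at hzIc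
      exact hpoint a b x haE hbP hxP hab (Ne.symm hxa) (hzIc ▸ hzI)
    · -- I = {1} : b vs a,x
      have hI : I = ({1} : Set (Fin 3)) := by
        ext i; fin_cases i <;> simp [h0, h1, h2]
      have hIc : Iᶜ = ({0, 2} : Set (Fin 3)) := by
        ext i; fin_cases i <;> simp [h0, h1, h2]
      rw [hI, Set.image_singleton, hp1, convexHull_singleton, Set.mem_singleton_iff] at hzI
      rw [hIc, Set.image_insert_eq, Set.image_singleton, hp0, hp2] at hzIc
      exact hpoint b a x hbE haP hxP (Ne.symm hab) (Ne.symm hxb) (hzI ▸ hzIc)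
    · -- I = {2} : x vs a,b
      have hI : I = ({2} : Set (Fin 3)) := by
        ext i; fin_cases i <;> simp [h0, h1, h2]
      have hIc : Iᶜ = ({0, 1} : Set (Fin 3)) := by
        ext i; fin_cases i <;> simp [h0, h1, h2]
      rw [hI, Set.image_singleton, hp2, convexHull_singleton, Set.mem_singleton_iff] at hzI
      rw [hIc, Set.image_insert_eq, Set.image_singleton, hp0, hp1] at hzIc
      exact hpoint x a b hxE haP hbP hxa hxb (hzI ▸ hzIc)
    · -- I = ∅
      have hI : I = (∅ : Set (Fin 3)) := by
        ext i; fin_cases i <;> simp [h0, h1, h2]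
      rw [hI] at hzI; simp at hzI
lemma no_K112 {N : ℕ} (S : Finset (Ept N)) {P : Set (Ept N)}
    (hPS : P = convexHull ℝ (S : Set (Ept N)))
    {x y a b : Ept N}
    (hx : IsExposed ℝ P {x}) (hy : IsExposed ℝ P {y})
    (ha : IsExposed ℝ P {a}) (hb : IsExposed ℝ P {b})
    (hxy : x ≠ y) (hxa : x ≠ a) (hxb : x ≠ b) (hya : y ≠ a) (hyb : y ≠ b) (hab : a ≠ b)
    (hall : ∀ v : Ept N, IsExposed ℝ P {v} → v = x ∨ v = y ∨ v = a ∨ v = b)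
    (exy : IsExposed ℝ P (segment ℝ x y)) (exa : IsExposed ℝ P (segment ℝ x a))
    (exb : IsExposed ℝ P (segment ℝ x b)) (eya : IsExposed ℝ P (segment ℝ y a))
    (eyb : IsExposed ℝ P (segment ℝ y b))
    (hnab : ¬ IsExposed ℝ P (segment ℝ a b)) : False := by
  classical
  have hPconv : Convex ℝ P := hPS ▸ convex_convexHull ℝ _
  have hxP : x ∈ P := hx.subset rfl
  have hyP : y ∈ P := hy.subset rfl
  have haP : a ∈ P := ha.subset rfl
  have hbP : b ∈ P := hb.subset rfl
  have hxE : x ∈ P.extremePoints ℝ :=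
    exposedPoints_subset_extremePoints (mem_exposedPoints_iff_exposed_singleton.2 hx)
  have hyE : y ∈ P.extremePoints ℝ :=
    exposedPoints_subset_extremePoints (mem_exposedPoints_iff_exposed_singleton.2 hy)
  have haE : a ∈ P.extremePoints ℝ :=
    exposedPoints_subset_extremePoints (mem_exposedPoints_iff_exposed_singleton.2 ha)
  have hbE : b ∈ P.extremePoints ℝ :=
    exposedPoints_subset_extremePoints (mem_exposedPoints_iff_exposed_singleton.2 hb)
  set p : Fin 4 → Ept N := ![a, b, x, y] with hp
  have hp0 : p 0 = a := rfl
  have hp1 : p 1 = b := rfl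
  have hp2 : p 2 = x := rfl
  have hp3 : p 3 = y := rfl
  by_cases hAI : AffineIndependent ℝ p
  · -- simplex : expose the segment [a,b]
    rw [affineIndependent_iff_linearIndependent_vsub ℝ p 0] at hAI
    obtain ⟨f, hf⟩ := exists_clm_eq (v := fun i : {i : Fin 4 // i ≠ 0} => p i -ᵥ p 0) hAI
      (fun i => if (i : Fin 4) = 1 then 0 else -1)
    have hfb : f (b - a) = 0 := by simpa [hp0, hp1] using hf ⟨1, by decide⟩
    have hfx : f (x - a) = -1 := by simpa [hp0, hp2] using hf ⟨2, by decide⟩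
    have hfy : f (y - a) = -1 := by simpa [hp0, hp3] using hf ⟨3, by decide⟩
    have hfb' : f b = f a := by rw [map_sub] at hfb; linarith
    have hfx' : f x = f a - 1 := by rw [map_sub] at hfx; linarith
    have hfy' : f y = f a - 1 := by rw [map_sub] at hfy; linarith
    have hPM : P = convexHull ℝ (({x, y, a, b} : Finset (Ept N)) : Set (Ept N)) := by
      have : P = convexHull ℝ ({x, y, a, b} : Set (Ept N)) := by
        apply hull_exposed_finite S hPS (Set.toFinite _)
        · intro v hv
          rcases hall v hv with rfl | rfl | rfl | rfl <;> simp
        · intro z hz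
          rcases hz with rfl | rfl | rfl | rfl
          · exact hxP
          · exact hyP
          · exact haP
          · exact hbP
      simpa using this
    have hexp : IsExposed ℝ P (convexHull ℝ (({a, b} : Finset (Ept N)) : Set (Ept N))) := by
      rw [hPM]
      apply expose_conv (S := {x, y, a, b}) (T := {a, b})
        (by intro v hv; simp at hv ⊢; tauto) ⟨a, by simp⟩ f (f a)
      · intro v hv
        simp at hv
        rcases hv with rfl | rfl
        · rfl
        · exact hfb'
      · intro v hv hvT
        simp at hv hvT
        rcases hv with rfl | rfl | rfl | rfl
        · rw [hfx']; linarith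
        · rw [hfy']; linarith
        · exact absurd rfl hvT.1
        · exact absurd rfl hvT.2
    rw [show (({a, b} : Finset (Ept N)) : Set (Ept N)) = {a, b} by simp,
      convexHull_pair] at hexp
    exact hnab hexp
  · -- degenerate : Radon partition
    obtain ⟨I, z, hzI, hzIc⟩ := Convex.radon_partition (𝕜 := ℝ) hAI
    have hpoint3 : ∀ u v w s : Ept N, u ∈ P.extremePoints ℝ → v ∈ P → w ∈ P → s ∈ P →
        u ≠ v → u ≠ w → u ≠ s → u ∈ convexHull ℝ ({v, w, s} : Set (Ept N)) → False := by
      intro u v w s hu hv hw hs huv huw hus hmem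
      have : u ∈ ({v, w, s} : Set (Ept N)) := by
        apply extreme_mem_of_mem_hull hPconv hu _ hmem
        intro z hz
        rcases hz with rfl | rfl | rfl
        · exact hv
        · exact hw
        · exact hs
      rcases this with rfl | rfl | rfl
      · exact huv rfl
      · exact huw rfl
      · exact hus rfl
    have hseg : ∀ u v s t : Ept N, IsExposed ℝ P (segment ℝ u v) →
        u ∈ P → v ∈ P → s ∈ P.extremePoints ℝ → t ∈ P.extremePoints ℝ →
        s ≠ u → s ≠ v → t ≠ u → t ≠ v →
        z ∈ segment ℝ u v → z ∈ segment ℝ s t → False := by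
      intro u v s t hexp huP hvP hsE htE hsu hsv htu htv hz1 hz2
      exact segment_clash hexp hsE.1 htE.1
        (fun hc => exposed_not_in_segment hsE huP hvP hsu hsv hc)
        (fun hc => exposed_not_in_segment htE huP hvP htu htv hc) hz1 hz2
    have eax : IsExposed ℝ P (segment ℝ a x) := by rw [segment_symm]; exact exa
    have eay : IsExposed ℝ P (segment ℝ a y) := by rw [segment_symm]; exact eya
    have ebx : IsExposed ℝ P (segment ℝ b x) := by rw [segment_symm]; exact exb
    have eby : IsExposed ℝ P (segment ℝ b y) := by rw [segment_symm]; exact eyb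
    by_cases h0 : (0 : Fin 4) ∈ I <;> by_cases h1 : (1 : Fin 4) ∈ I <;>
      by_cases h2 : (2 : Fin 4) ∈ I <;> by_cases h3 : (3 : Fin 4) ∈ I
    · -- I = univ
      have hIc : Iᶜ = (∅ : Set (Fin 4)) := by
        ext i; fin_cases i <;> simp [h0, h1, h2, h3]
      rw [hIc] at hzIc; simp at hzIc
    · -- I = {0,1,2} : a,b,x | y
      have hIc : Iᶜ = ({3} : Set (Fin 4)) := by
        ext i; fin_cases i <;> simp [h0, h1, h2, h3]
      have hI : I = ({0, 1, 2} : Set (Fin 4)) := by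
        ext i; fin_cases i <;> simp [h0, h1, h2, h3]
      rw [hIc, Set.image_singleton, hp3, convexHull_singleton, Set.mem_singleton_iff] at hzIc
      rw [hI, Set.image_insert_eq, Set.image_insert_eq, Set.image_singleton,
        hp0, hp1, hp2] at hzI
      exact hpoint3 y a b x hyE haP hbP hxP hya hyb (Ne.symm hxy) (hzIc ▸ hzI)
    · -- I = {0,1,3} : a,b,y | x
      have hIc : Iᶜ = ({2} : Set (Fin 4)) := by
        ext i; fin_cases i <;> simp [h0, h1, h2, h3]
      have hI : I = ({0, 1, 3} : Set (Fin 4)) := by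
        ext i; fin_cases i <;> simp [h0, h1, h2, h3]
      rw [hIc, Set.image_singleton, hp2, convexHull_singleton, Set.mem_singleton_iff] at hzIc
      rw [hI, Set.image_insert_eq, Set.image_insert_eq, Set.image_singleton,
        hp0, hp1, hp3] at hzI
      exact hpoint3 x a b y hxE haP hbP hyP hxa hxb hxy (hzIc ▸ hzI)
    · -- I = {0,1} : a,b | x,y
      have hI : I = ({0, 1} : Set (Fin 4)) := by
        ext i; fin_cases i <;> simp [h0, h1, h2, h3]
      have hIc : Iᶜ = ({2, 3} : Set (Fin 4)) := by
        ext i; fin_cases i <;> simp [h0, h1, h2, h3]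
      rw [hI, Set.image_insert_eq, Set.image_singleton, hp0, hp1, convexHull_pair] at hzI
      rw [hIc, Set.image_insert_eq, Set.image_singleton, hp2, hp3, convexHull_pair] at hzIc
      exact hseg x y a b exy hxP hyP haE hbE (Ne.symm hxa) (Ne.symm hya)
        (Ne.symm hxb) (Ne.symm hyb) hzIc hzI
    · -- I = {0,2,3} : a,x,y | b
      have hIc : Iᶜ = ({1} : Set (Fin 4)) := by
        ext i; fin_cases i <;> simp [h0, h1, h2, h3]
      have hI : I = ({0, 2, 3} : Set (Fin 4)) := by
        ext i; fin_cases i <;> simp [h0, h1, h2, h3]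
      rw [hIc, Set.image_singleton, hp1, convexHull_singleton, Set.mem_singleton_iff] at hzIc
      rw [hI, Set.image_insert_eq, Set.image_insert_eq, Set.image_singleton,
        hp0, hp2, hp3] at hzI
      exact hpoint3 b a x y hbE haP hxP hyP (Ne.symm hab) (Ne.symm hxb) (Ne.symm hyb)
        (hzIc ▸ hzI)
    · -- I = {0,2} : a,x | b,y
      have hI : I = ({0, 2} : Set (Fin 4)) := by
        ext i; fin_cases i <;> simp [h0, h1, h2, h3]
      have hIc : Iᶜ = ({1, 3} : Set (Fin 4)) := by
        ext i; fin_cases i <;> simp [h0, h1, h2, h3]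
      rw [hI, Set.image_insert_eq, Set.image_singleton, hp0, hp2, convexHull_pair] at hzI
      rw [hIc, Set.image_insert_eq, Set.image_singleton, hp1, hp3, convexHull_pair] at hzIc
      exact hseg a x b y eax haP hxP hbE hyE (Ne.symm hab) (Ne.symm hxb) hya (Ne.symm hxy)
        hzI hzIc
    · -- I = {0,3} : a,y | b,x
      have hI : I = ({0, 3} : Set (Fin 4)) := by
        ext i; fin_cases i <;> simp [h0, h1, h2, h3]
      have hIc : Iᶜ = ({1, 2} : Set (Fin 4)) := by
        ext i; fin_cases i <;> simp [h0, h1, h2, h3]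
      rw [hI, Set.image_insert_eq, Set.image_singleton, hp0, hp3, convexHull_pair] at hzI
      rw [hIc, Set.image_insert_eq, Set.image_singleton, hp1, hp2, convexHull_pair] at hzIc
      exact hseg a y b x eay haP hyP hbE hxE (Ne.symm hab) (Ne.symm hyb) hxa hxy
        hzI hzIc
    · -- I = {0} : a | b,x,y
      have hI : I = ({0} : Set (Fin 4)) := by
        ext i; fin_cases i <;> simp [h0, h1, h2, h3]
      have hIc : Iᶜ = ({1, 2, 3} : Set (Fin 4)) := by
        ext i; fin_cases i <;> simp [h0, h1, h2, h3]
      rw [hI, Set.image_singleton, hp0, convexHull_singleton, Set.mem_singleton_iff] at hzI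
      rw [hIc, Set.image_insert_eq, Set.image_insert_eq, Set.image_singleton,
        hp1, hp2, hp3] at hzIc
      exact hpoint3 a b x y haE hbP hxP hyP hab (Ne.symm hxa) (Ne.symm hya) (hzI ▸ hzIc)
    · -- I = {1,2,3} : b,x,y | a
      have hIc : Iᶜ = ({0} : Set (Fin 4)) := by
        ext i; fin_cases i <;> simp [h0, h1, h2, h3]
      have hI : I = ({1, 2, 3} : Set (Fin 4)) := by
        ext i; fin_cases i <;> simp [h0, h1, h2, h3]
      rw [hIc, Set.image_singleton, hp0, convexHull_singleton, Set.mem_singleton_iff] at hzIc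
      rw [hI, Set.image_insert_eq, Set.image_insert_eq, Set.image_singleton,
        hp1, hp2, hp3] at hzI
      exact hpoint3 a b x y haE hbP hxP hyP hab (Ne.symm hxa) (Ne.symm hya) (hzIc ▸ hzI)
    · -- I = {1,2} : b,x | a,y
      have hI : I = ({1, 2} : Set (Fin 4)) := by
        ext i; fin_cases i <;> simp [h0, h1, h2, h3]
      have hIc : Iᶜ = ({0, 3} : Set (Fin 4)) := by
        ext i; fin_cases i <;> simp [h0, h1, h2, h3]
      rw [hI, Set.image_insert_eq, Set.image_singleton, hp1, hp2, convexHull_pair] at hzI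
      rw [hIc, Set.image_insert_eq, Set.image_singleton, hp0, hp3, convexHull_pair] at hzIc
      exact hseg b x a y ebx hbP hxP haE hyE hab (Ne.symm hxa) hyb (Ne.symm hxy)
        hzI hzIc
    · -- I = {1,3} : b,y | a,x
      have hI : I = ({1, 3} : Set (Fin 4)) := by
        ext i; fin_cases i <;> simp [h0, h1, h2, h3]
      have hIc : Iᶜ = ({0, 2} : Set (Fin 4)) := by
        ext i; fin_cases i <;> simp [h0, h1, h2, h3]
      rw [hI, Set.image_insert_eq, Set.image_singleton, hp1, hp3, convexHull_pair] at hzI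
      rw [hIc, Set.image_insert_eq, Set.image_singleton, hp0, hp2, convexHull_pair] at hzIc
      exact hseg b y a x eby hbP hyP haE hxE hab (Ne.symm hya) hxb hxy
        hzI hzIc
    · -- I = {1} : b | a,x,y
      have hI : I = ({1} : Set (Fin 4)) := by
        ext i; fin_cases i <;> simp [h0, h1, h2, h3]
      have hIc : Iᶜ = ({0, 2, 3} : Set (Fin 4)) := by
        ext i; fin_cases i <;> simp [h0, h1, h2, h3]
      rw [hI, Set.image_singleton, hp1, convexHull_singleton, Set.mem_singleton_iff] at hzI
      rw [hIc, Set.image_insert_eq, Set.image_insert_eq, Set.image_singleton,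
        hp0, hp2, hp3] at hzIc
      exact hpoint3 b a x y hbE haP hxP hyP (Ne.symm hab) (Ne.symm hxb) (Ne.symm hyb)
        (hzI ▸ hzIc)
    · -- I = {2,3} : x,y | a,b
      have hI : I = ({2, 3} : Set (Fin 4)) := by
        ext i; fin_cases i <;> simp [h0, h1, h2, h3]
      have hIc : Iᶜ = ({0, 1} : Set (Fin 4)) := by
        ext i; fin_cases i <;> simp [h0, h1, h2, h3]
      rw [hI, Set.image_insert_eq, Set.image_singleton, hp2, hp3, convexHull_pair] at hzI
      rw [hIc, Set.image_insert_eq, Set.image_singleton, hp0, hp1, convexHull_pair] at hzIc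
      exact hseg x y a b exy hxP hyP haE hbE (Ne.symm hxa) (Ne.symm hya)
        (Ne.symm hxb) (Ne.symm hyb) hzI hzIc
    · -- I = {2} : x | a,b,y
      have hI : I = ({2} : Set (Fin 4)) := by
        ext i; fin_cases i <;> simp [h0, h1, h2, h3]
      have hIc : Iᶜ = ({0, 1, 3} : Set (Fin 4)) := by
        ext i; fin_cases i <;> simp [h0, h1, h2, h3]
      rw [hI, Set.image_singleton, hp2, convexHull_singleton, Set.mem_singleton_iff] at hzI
      rw [hIc, Set.image_insert_eq, Set.image_insert_eq, Set.image_singleton,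
        hp0, hp1, hp3] at hzIc
      exact hpoint3 x a b y hxE haP hbP hyP hxa hxb hxy (hzI ▸ hzIc)
    · -- I = {3} : y | a,b,x
      have hI : I = ({3} : Set (Fin 4)) := by
        ext i; fin_cases i <;> simp [h0, h1, h2, h3]
      have hIc : Iᶜ = ({0, 1, 2} : Set (Fin 4)) := by
        ext i; fin_cases i <;> simp [h0, h1, h2, h3]
      rw [hI, Set.image_singleton, hp3, convexHull_singleton, Set.mem_singleton_iff] at hzI
      rw [hIc, Set.image_insert_eq, Set.image_insert_eq, Set.image_singleton,
        hp0, hp1, hp2] at hzIc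
      exact hpoint3 y a b x hyE haP hbP hxP hya hyb (Ne.symm hxy) (hzI ▸ hzIc)
    · -- I = ∅
      have hI : I = (∅ : Set (Fin 4)) := by
        ext i; fin_cases i <;> simp [h0, h1, h2, h3]
      rw [hI] at hzI; simp at hzI
lemma proj_apply' {n : ℕ} (i : Fin n) (x : Ept n) :
    (EuclideanSpace.proj i : Ept n →L[ℝ] ℝ) x = x i := rfl

lemma constructionB {t : ℕ} (nn : Fin t → ℕ) (hnn : ∀ i, nn i = 1 ∨ nn i = 2)
    (hm : ∀ i, nn i = 2 → ∃ i', i' ≠ i ∧ nn i' = 2) :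
    ∃ P : Set (Ept t), IsPolytope P ∧
      Nonempty (polyGraph P ≃g SimpleGraph.completeMultipartiteGraph fun i => Fin (nn i)) := by
  classical
  set sg : (Σ i : Fin t, Fin (nn i)) → ℝ := fun s => if (s.2 : ℕ) = 0 then 1 else -1 with hsg
  set vmap : (Σ i : Fin t, Fin (nn i)) → Ept t :=
    fun s => sg s • EuclideanSpace.single s.1 1 with hvmap
  set S : Finset (Ept t) := Finset.image vmap Finset.univ with hSdef
  set P : Set (Ept t) := convexHull ℝ (S : Set (Ept t)) with hPdef
  have hval : ∀ {i : Fin t} (j : Fin (nn i)), (j : ℕ) = 0 ∨ (j : ℕ) = 1 := by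
    intro i j
    have h2 := j.2
    rcases hnn i with h | h <;> omega
  have coord : ∀ (s : Σ i : Fin t, Fin (nn i)) (l : Fin t),
      vmap s l = sg s * (if l = s.1 then 1 else 0) := by
    intro s l
    simp [hvmap, EuclideanSpace.single_apply]
  have hsgsq : ∀ s, sg s * sg s = 1 := by
    intro s; rcases hval s.2 with h | h <;> simp [hsg, h]
  have hsgval : ∀ s, sg s = 1 ∨ sg s = -1 := by
    intro s; rcases hval s.2 with h | h <;> simp [hsg, h]
  have hprod : ∀ u v : (Σ i : Fin t, Fin (nn i)), u.1 = v.1 → u ≠ v → sg u * sg v = -1 := by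
    rintro ⟨i, j⟩ ⟨i', j'⟩ h hne
    have h' : i = i' := h
    subst h'
    have hjj : j ≠ j' := fun hc => hne (by rw [hc])
    rcases hval j with h1 | h1 <;> rcases hval j' with h2 | h2
    · exact absurd (Fin.ext (h1.trans h2.symm)) hjj
    · simp [hsg, h1, h2]
    · simp [hsg, h1, h2]
    · exact absurd (Fin.ext (h1.trans h2.symm)) hjj
  have hnegpair : ∀ u v : (Σ i : Fin t, Fin (nn i)), u.1 = v.1 → u ≠ v →
      vmap v = - vmap u := by
    rintro ⟨i, j⟩ ⟨i', j'⟩ h hne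
    have h' : i = i' := h
    subst h'
    have hjj : j ≠ j' := fun hc => hne (by rw [hc])
    have h1 : sg ⟨i, j'⟩ = - sg ⟨i, j⟩ := by
      rcases hval j with h1 | h1 <;> rcases hval j' with h2 | h2
      · exact absurd (Fin.ext (h1.trans h2.symm)) hjj
      · simp [hsg, h1, h2]
      · simp [hsg, h1, h2]
      · exact absurd (Fin.ext (h1.trans h2.symm)) hjj
    show sg ⟨i, j'⟩ • EuclideanSpace.single i (1:ℝ) = -(sg ⟨i, j⟩ • EuclideanSpace.single i 1)
    rw [h1, neg_smul]
  have hinj : Function.Injective vmap := by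
    intro u v h
    by_cases huv : u = v
    · exact huv
    · by_cases hfst : u.1 = v.1
      · have h1 := hnegpair u v hfst huv
        rw [h] at h1
        have hc : vmap v v.1 = (-vmap v) v.1 := by rw [← h1]
        rw [coord] at hc
        rw [PiLp.neg_apply, coord, if_pos rfl] at hc
        rcases hsgval v with h2 | h2 <;> rw [h2] at hc <;> norm_num at hc
      · exfalso
        have hc : vmap u u.1 = vmap v u.1 := by rw [h]
        rw [coord, coord, if_pos rfl, if_neg (fun hcc : u.1 = v.1 => hfst hcc)] at hc
        rcases hsgval u with h2 | h2 <;> rw [h2] at hc <;> norm_num at hc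
  have hSmem : ∀ s, vmap s ∈ S := fun s => Finset.mem_image_of_mem vmap (Finset.mem_univ s)
  have hPmem : ∀ s, vmap s ∈ P := fun s => subset_convexHull ℝ _ (by exact_mod_cast hSmem s)
  -- singletons are exposed
  have hsing : ∀ s, IsExposed ℝ P {vmap s} := by
    intro s
    have h := expose_conv (S := S) (T := {vmap s})
      (Finset.singleton_subset_iff.2 (hSmem s)) ⟨vmap s, Finset.mem_singleton_self _⟩
      (sg s • EuclideanSpace.proj s.1) 1 ?_ ?_
    · rw [hPdef]
      convert h using 1
      simp
    · intro v hv
      rw [Finset.mem_singleton] at hv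
      subst hv
      rw [ContinuousLinearMap.smul_apply, proj_apply', coord, if_pos rfl, smul_eq_mul,
        mul_one]
      exact hsgsq s
    · intro v hv hvT
      rw [Finset.mem_singleton] at hvT
      obtain ⟨u, -, rfl⟩ := Finset.mem_image.1 hv
      have hus : u ≠ s := fun hc => hvT (by rw [hc])
      rw [ContinuousLinearMap.smul_apply, proj_apply', coord, smul_eq_mul]
      by_cases hA : s.1 = u.1
      · rw [if_pos hA, mul_one]
        rw [hprod s u hA (Ne.symm hus)]
        norm_num
      · rw [if_neg hA, mul_zero, mul_zero]
        norm_num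
  -- pairs from distinct parts give exposed segments
  have hedge : ∀ s s' : (Σ i : Fin t, Fin (nn i)), s.1 ≠ s'.1 →
      IsExposed ℝ P (segment ℝ (vmap s) (vmap s')) := by
    intro s s' hne
    have h := expose_conv (S := S) (T := {vmap s, vmap s'})
      (Finset.insert_subset_iff.2 ⟨hSmem s, Finset.singleton_subset_iff.2 (hSmem s')⟩)
      ⟨vmap s, Finset.mem_insert_self _ _⟩
      (sg s • EuclideanSpace.proj s.1 + sg s' • EuclideanSpace.proj s'.1) 1 ?_ ?_
    · rw [hPdef]
      have hcoe : ((({vmap s, vmap s'} : Finset (Ept t)) : Set (Ept t))) = {vmap s, vmap s'} := by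
        simp
      rw [hcoe, convexHull_pair] at h
      exact h
    · intro v hv
      rw [Finset.mem_insert, Finset.mem_singleton] at hv
      rcases hv with rfl | rfl <;>
        rw [ContinuousLinearMap.add_apply, ContinuousLinearMap.smul_apply,
          ContinuousLinearMap.smul_apply, proj_apply', proj_apply', coord, coord,
          smul_eq_mul, smul_eq_mul]
      · rw [if_pos rfl, if_neg (fun hc : s'.1 = s.1 => hne hc.symm), mul_one, mul_zero,
          mul_zero, add_zero]
        exact hsgsq s
      · rw [if_pos rfl, if_neg (fun hc : s.1 = s'.1 => hne hc), mul_one, mul_zero,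
          mul_zero, zero_add]
        exact hsgsq s'
    · intro v hv hvT
      rw [Finset.mem_insert, Finset.mem_singleton] at hvT
      push_neg at hvT
      obtain ⟨u, -, rfl⟩ := Finset.mem_image.1 hv
      have hus : u ≠ s := fun hc => hvT.1 (by rw [hc])
      have hus' : u ≠ s' := fun hc => hvT.2 (by rw [hc])
      rw [ContinuousLinearMap.add_apply, ContinuousLinearMap.smul_apply,
        ContinuousLinearMap.smul_apply, proj_apply', proj_apply', coord, coord,
        smul_eq_mul, smul_eq_mul]
      by_cases hA : s.1 = u.1 <;> by_cases hB : s'.1 = u.1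
      · exact absurd (hA.trans hB.symm) hne
      · have hp := hprod s u hA (Ne.symm hus)
        rw [if_pos hA, if_neg hB]
        simp only [mul_one, mul_zero, add_zero, zero_add]
        nlinarith [hp]
      · have hp := hprod s' u hB (Ne.symm hus')
        rw [if_neg hA, if_pos hB]
        simp only [mul_one, mul_zero, add_zero, zero_add]
        nlinarith [hp]
      · rw [if_neg hA, if_neg hB]
        simp only [mul_one, mul_zero, add_zero, zero_add]
        norm_num
  -- pairs from the same part do not give exposed segments
  have hnonedge : ∀ s s' : (Σ i : Fin t, Fin (nn i)), s ≠ s' → s.1 = s'.1 →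
      ¬ IsExposed ℝ P (segment ℝ (vmap s) (vmap s')) := by
    intro s s' hne hii hexp
    have hnn2 : nn s.1 = 2 := by
      rcases hnn s.1 with h | h
      · exfalso
        apply hne
        obtain ⟨i, j⟩ := s
        obtain ⟨i', j'⟩ := s'
        have h' : i = i' := hii
        subst h'
        congr 1
        apply Fin.ext
        have h1 := j.2
        have h2 := j'.2
        simp only at h
        omega
      · exact h
    obtain ⟨i2, hi2ne, hi22⟩ := hm s.1 hnn2
    set u0 : (Σ l : Fin t, Fin (nn l)) := ⟨i2, ⟨0, by omega⟩⟩ with hu0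
    set u1 : (Σ l : Fin t, Fin (nn l)) := ⟨i2, ⟨1, by omega⟩⟩ with hu1
    have hneg10 : vmap u1 = - vmap u0 := by
      apply hnegpair u0 u1 rfl
      intro hc
      have : (0 : ℕ) = 1 := by
        have := congrArg (fun z : (Σ l : Fin t, Fin (nn l)) => (z.2 : ℕ)) hc
        simpa using this
      omega
    have hneg' : vmap s' = - vmap s := hnegpair s s' hii hne
    obtain ⟨l, hl⟩ := hexp ⟨vmap s, left_mem_segment ℝ _ _⟩
    have hmem1 : vmap s ∈ segment ℝ (vmap s) (vmap s') := left_mem_segment ℝ _ _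
    have hmem2 : vmap s' ∈ segment ℝ (vmap s) (vmap s') := right_mem_segment ℝ _ _
    rw [hl] at hmem1 hmem2
    have hl0 : l (vmap s) = 0 := by
      have h1 := hmem1.2 _ (hPmem s')
      have h2 := hmem2.2 _ (hPmem s)
      rw [hneg', map_neg] at h1 h2
      linarith
    have hle : ∀ y ∈ P, l y ≤ 0 := by
      intro y hy
      have := hmem1.2 y hy
      rwa [hl0] at this
    have hu0zero : l (vmap u0) = 0 := by
      have h1 := hle _ (hPmem u0)
      have h2 := hle _ (hPmem u1)
      rw [hneg10, map_neg] at h2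
      linarith
    have hu0seg : vmap u0 ∈ segment ℝ (vmap s) (vmap s') := by
      rw [hl]
      exact ⟨hPmem u0, fun y hy => by rw [hu0zero]; exact hle y hy⟩
    obtain ⟨α, β, hα, hβ, hαβ, hsum⟩ := hu0seg
    have hcoord : (α • vmap s + β • vmap s') i2 = vmap u0 i2 := by rw [hsum]
    rw [PiLp.add_apply, PiLp.smul_apply (x := vmap s), PiLp.smul_apply (x := vmap s'), coord, coord, coord] at hcoord
    rw [if_neg hi2ne, if_neg (hii ▸ hi2ne), if_pos rfl] at hcoord
    simp only [smul_eq_mul, mul_zero, mul_one, add_zero, zero_add] at hcoord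
    rcases hsgval u0 with h | h <;> rw [h] at hcoord <;> norm_num at hcoord
  -- every exposed point is a vertex
  have hsur : ∀ x : Ept t, IsExposed ℝ P {x} → ∃ s, vmap s = x := by
    intro x hx
    have hxS : x ∈ S := exposed_mem_finset S (by rw [← hPdef]; exact hx)
    obtain ⟨s, -, hs⟩ := Finset.mem_image.1 hxS
    exact ⟨s, hs⟩
  -- assemble the isomorphism
  have hbij : Function.Bijective
      (fun s => (⟨vmap s, hsing s⟩ : {x : Ept t // IsExposed ℝ P {x}})) := by
    constructor
    · intro s s' h
      exact hinj (congrArg Subtype.val h)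
    · rintro ⟨x, hx⟩
      obtain ⟨s, hs⟩ := hsur x hx
      exact ⟨s, Subtype.ext hs⟩
  refine ⟨P, ⟨S, hPdef⟩, ⟨SimpleGraph.Iso.symm ⟨Equiv.ofBijective _ hbij, ?_⟩⟩⟩
  intro s s'
  show (polyGraph P).Adj ⟨vmap s, hsing s⟩ ⟨vmap s', hsing s'⟩ ↔ _
  simp only [SimpleGraph.comap_adj, SimpleGraph.top_adj]
  constructor
  · rintro ⟨hne, hseg⟩
    by_contra heq
    have hne' : s ≠ s' := fun hc => hne (by rw [hc])
    exact hnonedge s s' hne' (by simpa using heq) hseg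
  · intro h
    refine ⟨?_, hedge s s' h⟩
    intro hc
    have hvv : vmap s = vmap s' := congrArg Subtype.val hc
    exact h (congrArg Sigma.fst (hinj hvv))
lemma constructionC {t : ℕ} (nn : Fin t → ℕ)
    (i₂ : Fin t) (h2 : nn i₂ = 2) (h1 : ∀ i, i ≠ i₂ → nn i = 1) (ht4 : 4 ≤ t) :
    ∃ P : Set (Ept t), IsPolytope P ∧
      Nonempty (polyGraph P ≃g SimpleGraph.completeMultipartiteGraph fun i => Fin (nn i)) := by
  classical
  set K : ℝ := ((t - 1 : ℕ) : ℝ) with hKdef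
  have hK3 : (3 : ℝ) ≤ K := by
    rw [hKdef]
    have : (3 : ℕ) ≤ t - 1 := by omega
    exact_mod_cast this
  have hKpos : (0 : ℝ) < K := by linarith
  have hKinv_pos : (0 : ℝ) < K⁻¹ := inv_pos.2 hKpos
  have hKinv_le : K⁻¹ ≤ 1/3 := by
    rw [inv_le_comm₀ hKpos (by norm_num)]
    linarith
  set c : Ept t := (WithLp.equiv 2 (Fin t → ℝ)).symm
    (fun l => if l = i₂ then 0 else K⁻¹) with hcdef
  have hc_coord : ∀ l, c l = if l = i₂ then 0 else K⁻¹ := fun l => rfl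
  set sg : (Σ i : Fin t, Fin (nn i)) → ℝ := fun s => if (s.2 : ℕ) = 0 then 1 else -1 with hsg
  set vmap : (Σ i : Fin t, Fin (nn i)) → Ept t :=
    fun s => if s.1 = i₂ then c + sg s • EuclideanSpace.single i₂ 1
      else EuclideanSpace.single s.1 1 with hvmap
  set S : Finset (Ept t) := Finset.image vmap Finset.univ with hSdef
  set P : Set (Ept t) := convexHull ℝ (S : Set (Ept t)) with hPdef
  have hval : ∀ {i : Fin t} (j : Fin (nn i)), (j : ℕ) = 0 ∨ (j : ℕ) = 1 := by
    intro i j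
    have hj := j.2
    rcases (em (i = i₂)) with h | h
    · subst h; omega
    · have := h1 i h; omega
  have hsgsq : ∀ s, sg s * sg s = 1 := by
    intro s; rcases hval s.2 with h | h <;> simp [hsg, h]
  have hsgval : ∀ s, sg s = 1 ∨ sg s = -1 := by
    intro s; rcases hval s.2 with h | h <;> simp [hsg, h]
  have hprod : ∀ u v : (Σ i : Fin t, Fin (nn i)), u.1 = v.1 → u ≠ v → sg u * sg v = -1 := by
    rintro ⟨i, j⟩ ⟨i', j'⟩ h hne
    have h' : i = i' := h
    subst h'
    have hjj : j ≠ j' := fun hc => hne (by rw [hc])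
    rcases hval j with hA | hA <;> rcases hval j' with hB | hB
    · exact absurd (Fin.ext (hA.trans hB.symm)) hjj
    · simp [hsg, hA, hB]
    · simp [hsg, hA, hB]
    · exact absurd (Fin.ext (hA.trans hB.symm)) hjj
  -- coordinates of vertices
  have evalA : ∀ (u : Σ i : Fin t, Fin (nn i)), u.1 = i₂ → ∀ l,
      vmap u l = if l = i₂ then sg u else K⁻¹ := by
    intro u hu l
    rw [hvmap]
    simp only [if_pos hu]
    rw [PiLp.add_apply, PiLp.smul_apply, hc_coord, EuclideanSpace.single_apply, smul_eq_mul]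
    by_cases hl : l = i₂
    · rw [if_pos hl, if_pos hl, if_pos hl, mul_one, zero_add]
    · rw [if_neg hl, if_neg hl, if_neg hl, mul_zero, add_zero]
  have evalB : ∀ (u : Σ i : Fin t, Fin (nn i)), u.1 ≠ i₂ → ∀ l,
      vmap u l = if l = u.1 then 1 else 0 := by
    intro u hu l
    rw [hvmap]
    simp only [if_neg hu]
    rw [EuclideanSpace.single_apply]
  have hKinv_ne_one : K⁻¹ ≠ 1 := by
    intro h; rw [h] at hKinv_le; norm_num at hKinv_le
  have hinj : Function.Injective vmap := by
    intro u v h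
    by_cases hu : u.1 = i₂ <;> by_cases hv : v.1 = i₂
    · -- both apexes
      by_cases hjeq : u = v
      · exact hjeq
      · exfalso
        have hc2 : vmap u i₂ = vmap v i₂ := by rw [h]
        rw [evalA u hu, evalA v hv, if_pos rfl, if_pos rfl] at hc2
        have hp := hprod u v (hu.trans hv.symm) hjeq
        rw [hc2, hsgsq v] at hp
        norm_num at hp
    · exfalso
      have hc2 : vmap u i₂ = vmap v i₂ := by rw [h]
      rw [evalA u hu, evalB v hv, if_pos rfl, if_neg (fun hcc : i₂ = v.1 => hv hcc.symm)] at hc2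
      rcases hsgval u with hs | hs <;> rw [hs] at hc2 <;> norm_num at hc2
    · exfalso
      have hc2 : vmap u i₂ = vmap v i₂ := by rw [h]
      rw [evalB u hu, evalA v hv, if_pos rfl, if_neg (fun hcc : i₂ = u.1 => hu hcc.symm)] at hc2
      rcases hsgval v with hs | hs <;> rw [hs] at hc2 <;> norm_num at hc2
    · -- both base
      have hc2 : vmap u u.1 = vmap v u.1 := by rw [h]
      rw [evalB u hu, evalB v hv, if_pos rfl] at hc2
      by_cases hfst : u.1 = v.1
      · obtain ⟨i, j⟩ := u
        obtain ⟨i', j'⟩ := v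
        have h' : i = i' := hfst
        subst h'
        congr 1
        apply Fin.ext
        have e1 := j.2
        have e2 := j'.2
        have e3 := h1 i hu
        omega
      · rw [if_neg (fun hcc : u.1 = v.1 => hfst hcc)] at hc2
        norm_num at hc2
  have hSmem : ∀ s, vmap s ∈ S := fun s => Finset.mem_image_of_mem vmap (Finset.mem_univ s)
  have hPmem : ∀ s, vmap s ∈ P := fun s => subset_convexHull ℝ _ (by exact_mod_cast hSmem s)
  -- singletons are exposed
  have hsing : ∀ s, IsExposed ℝ P {vmap s} := by
    intro s
    by_cases hs : s.1 = i₂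
    · -- apex
      have h := expose_conv (S := S) (T := {vmap s})
        (Finset.singleton_subset_iff.2 (hSmem s)) ⟨vmap s, Finset.mem_singleton_self _⟩
        (sg s • EuclideanSpace.proj i₂) 1 ?_ ?_
      · rw [hPdef]; convert h using 1; simp
      · intro v hv
        rw [Finset.mem_singleton] at hv
        subst hv
        rw [ContinuousLinearMap.smul_apply, proj_apply', evalA s hs, if_pos rfl, smul_eq_mul]
        exact hsgsq s
      · intro v hv hvT
        rw [Finset.mem_singleton] at hvT
        obtain ⟨u, -, rfl⟩ := Finset.mem_image.1 hv
        have hus : u ≠ s := fun hcc => hvT (by rw [hcc])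
        rw [ContinuousLinearMap.smul_apply, proj_apply', smul_eq_mul]
        by_cases hu : u.1 = i₂
        · rw [evalA u hu, if_pos rfl, hprod s u (hs.trans hu.symm) (Ne.symm hus)]
          norm_num
        · rw [evalB u hu, if_neg (fun hcc : i₂ = u.1 => hu hcc.symm), mul_zero]
          norm_num
    · -- base
      have h := expose_conv (S := S) (T := {vmap s})
        (Finset.singleton_subset_iff.2 (hSmem s)) ⟨vmap s, Finset.mem_singleton_self _⟩
        (EuclideanSpace.proj s.1) 1 ?_ ?_
      · rw [hPdef]; convert h using 1; simp
      · intro v hv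
        rw [Finset.mem_singleton] at hv
        subst hv
        rw [proj_apply', evalB s hs, if_pos rfl]
      · intro v hv hvT
        rw [Finset.mem_singleton] at hvT
        obtain ⟨u, -, rfl⟩ := Finset.mem_image.1 hv
        have hus : u ≠ s := fun hcc => hvT (by rw [hcc])
        rw [proj_apply']
        by_cases hu : u.1 = i₂
        · rw [evalA u hu, if_neg (fun hcc : s.1 = i₂ => hs hcc)]
          linarith
        · have hfst : u.1 ≠ s.1 := by
            intro hcc
            apply hus
            obtain ⟨i, j⟩ := u
            obtain ⟨i', j'⟩ := s
            have h' : i = i' := hcc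
            subst h'
            congr 1
            apply Fin.ext
            have e1 := j.2
            have e2 := j'.2
            have e3 := h1 i hu
            omega
          rw [evalB u hu, if_neg (fun hcc : s.1 = u.1 => hfst hcc.symm)]
          norm_num
  -- base-base edges
  have hedgeBB : ∀ s s' : (Σ i : Fin t, Fin (nn i)), s.1 ≠ i₂ → s'.1 ≠ i₂ → s.1 ≠ s'.1 →
      IsExposed ℝ P (segment ℝ (vmap s) (vmap s')) := by
    intro s s' hs hs' hne
    have h := expose_conv (S := S) (T := {vmap s, vmap s'})
      (Finset.insert_subset_iff.2 ⟨hSmem s, Finset.singleton_subset_iff.2 (hSmem s')⟩)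
      ⟨vmap s, Finset.mem_insert_self _ _⟩
      (EuclideanSpace.proj s.1 + EuclideanSpace.proj s'.1) 1 ?_ ?_
    · rw [hPdef]
      have hcoe : ((({vmap s, vmap s'} : Finset (Ept t)) : Set (Ept t))) = {vmap s, vmap s'} := by
        simp
      rw [hcoe, convexHull_pair] at h
      exact h
    · intro v hv
      rw [Finset.mem_insert, Finset.mem_singleton] at hv
      rcases hv with rfl | rfl <;>
        rw [ContinuousLinearMap.add_apply, proj_apply', proj_apply']
      · rw [evalB s hs, evalB s hs, if_pos rfl, if_neg (fun hcc : s'.1 = s.1 => hne hcc.symm)]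
        norm_num
      · rw [evalB s' hs', evalB s' hs', if_pos rfl, if_neg (fun hcc : s.1 = s'.1 => hne hcc)]
        norm_num
    · intro v hv hvT
      rw [Finset.mem_insert, Finset.mem_singleton] at hvT
      push_neg at hvT
      obtain ⟨u, -, rfl⟩ := Finset.mem_image.1 hv
      have hus : u ≠ s := fun hcc => hvT.1 (by rw [hcc])
      have hus' : u ≠ s' := fun hcc => hvT.2 (by rw [hcc])
      rw [ContinuousLinearMap.add_apply, proj_apply', proj_apply']
      by_cases hu : u.1 = i₂
      · rw [evalA u hu, evalA u hu, if_neg (fun hcc : s.1 = i₂ => hs hcc),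
          if_neg (fun hcc : s'.1 = i₂ => hs' hcc)]
        linarith
      · have hbase_ne : ∀ w : (Σ i : Fin t, Fin (nn i)), w.1 ≠ i₂ → u ≠ w → u.1 ≠ w.1 := by
          intro w hw huw hcc
          apply huw
          obtain ⟨i, j⟩ := u
          obtain ⟨i', j'⟩ := w
          have h' : i = i' := hcc
          subst h'
          congr 1
          apply Fin.ext
          have e1 := j.2
          have e2 := j'.2
          have e3 := h1 i hu
          omega
        rw [evalB u hu, evalB u hu, if_neg (fun hcc : s.1 = u.1 => hbase_ne s hs hus hcc.symm),
          if_neg (fun hcc : s'.1 = u.1 => hbase_ne s' hs' hus' hcc.symm)]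
        norm_num
  -- base-apex edges
  have hedgeBA : ∀ s s' : (Σ i : Fin t, Fin (nn i)), s.1 ≠ i₂ → s'.1 = i₂ →
      IsExposed ℝ P (segment ℝ (vmap s) (vmap s')) := by
    intro s s' hs hs'
    have h := expose_conv (S := S) (T := {vmap s, vmap s'})
      (Finset.insert_subset_iff.2 ⟨hSmem s, Finset.singleton_subset_iff.2 (hSmem s')⟩)
      ⟨vmap s, Finset.mem_insert_self _ _⟩
      (EuclideanSpace.proj s.1 + ((1 - K⁻¹) * sg s') • EuclideanSpace.proj i₂) 1 ?_ ?_
    · rw [hPdef]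
      have hcoe : ((({vmap s, vmap s'} : Finset (Ept t)) : Set (Ept t))) = {vmap s, vmap s'} := by
        simp
      rw [hcoe, convexHull_pair] at h
      exact h
    · intro v hv
      rw [Finset.mem_insert, Finset.mem_singleton] at hv
      rcases hv with rfl | rfl <;>
        rw [ContinuousLinearMap.add_apply, ContinuousLinearMap.smul_apply, proj_apply',
          proj_apply', smul_eq_mul]
      · rw [evalB s hs, evalB s hs, if_pos rfl, if_neg (fun hcc : i₂ = s.1 => hs hcc.symm),
          mul_zero, add_zero]
      · rw [evalA s' hs', evalA s' hs', if_pos rfl, if_neg (fun hcc : s.1 = i₂ => hs hcc)]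
        nlinarith [hsgsq s']
    · intro v hv hvT
      rw [Finset.mem_insert, Finset.mem_singleton] at hvT
      push_neg at hvT
      obtain ⟨u, -, rfl⟩ := Finset.mem_image.1 hv
      have hus : u ≠ s := fun hcc => hvT.1 (by rw [hcc])
      have hus' : u ≠ s' := fun hcc => hvT.2 (by rw [hcc])
      rw [ContinuousLinearMap.add_apply, ContinuousLinearMap.smul_apply, proj_apply',
        proj_apply', smul_eq_mul]
      by_cases hu : u.1 = i₂
      · -- the other apex
        rw [evalA u hu, evalA u hu, if_pos rfl, if_neg (fun hcc : s.1 = i₂ => hs hcc)]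
        have hp := hprod s' u (hs'.trans hu.symm) (Ne.symm hus')
        have he : (1 - K⁻¹) * sg s' * sg u = -(1 - K⁻¹) := by
          rw [mul_assoc, hp]; ring
        rw [he]
        linarith
      · -- another base vertex
        have hfst : u.1 ≠ s.1 := by
          intro hcc
          apply hus
          obtain ⟨i, j⟩ := u
          obtain ⟨i', j'⟩ := s
          have h' : i = i' := hcc
          subst h'
          congr 1
          apply Fin.ext
          have e1 := j.2
          have e2 := j'.2
          have e3 := h1 i hu
          omega
        rw [evalB u hu, evalB u hu, if_neg (fun hcc : s.1 = u.1 => hfst hcc.symm),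
          if_neg (fun hcc : i₂ = u.1 => hu hcc.symm), mul_zero, add_zero]
        norm_num
  -- the two apexes are not joined by an edge
  have hnonedge : ∀ s s' : (Σ i : Fin t, Fin (nn i)), s ≠ s' → s.1 = s'.1 →
      ¬ IsExposed ℝ P (segment ℝ (vmap s) (vmap s')) := by
    intro s s' hne hii hexp
    have hs2 : s.1 = i₂ := by
      by_contra hs2
      apply hne
      obtain ⟨i, j⟩ := s
      obtain ⟨i', j'⟩ := s'
      have h' : i = i' := hii
      subst h'
      congr 1
      apply Fin.ext
      have e1 := j.2
      have e2 := j'.2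
      have e3 := h1 i hs2
      omega
    have hs'2 : s'.1 = i₂ := hii ▸ hs2
    -- the defining functional
    obtain ⟨l, hl⟩ := hexp ⟨vmap s, left_mem_segment ℝ _ _⟩
    have hmem1 : vmap s ∈ segment ℝ (vmap s) (vmap s') := left_mem_segment ℝ _ _
    have hmem2 : vmap s' ∈ segment ℝ (vmap s) (vmap s') := right_mem_segment ℝ _ _
    rw [hl] at hmem1 hmem2
    set M : ℝ := l (vmap s) with hM
    have hM' : l (vmap s') = M := le_antisymm (hmem1.2 _ (hPmem s')) (hmem2.2 _ (hPmem s))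
    -- vmap s = c + sg s • e, vmap s' = c - sg s • e
    have hvs : vmap s = c + sg s • EuclideanSpace.single i₂ 1 := by
      rw [hvmap]; simp only [if_pos hs2]
    have hvs' : vmap s' = c + sg s' • EuclideanSpace.single i₂ 1 := by
      rw [hvmap]; simp only [if_pos hs'2]
    have hsgs' : sg s' = - sg s := by
      have hp := hprod s s' hii hne
      rcases hsgval s with h | h <;> rcases hsgval s' with h' | h' <;>
        rw [h, h'] at hp ⊢ <;> linarith
    have hlc : l c = M := by
      have e1 : l (vmap s) = l c + sg s * l (EuclideanSpace.single i₂ 1) := by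
        rw [hvs, map_add, map_smul, smul_eq_mul]
      have e2 : l (vmap s') = l c + sg s' * l (EuclideanSpace.single i₂ 1) := by
        rw [hvs', map_add, map_smul, smul_eq_mul]
      rw [← hM] at e1
      rw [hM'] at e2
      rw [hsgs'] at e2
      have hsq := hsgsq s
      rcases hsgval s with h | h <;> rw [h] at e1 e2 <;> linarith
    -- c is the average of the base vertices
    set U : Finset (Fin t) := Finset.univ.erase i₂ with hU
    have hcardU : (U.card : ℝ) = K := by
      rw [hU, hKdef]
      rw [Finset.card_erase_of_mem (Finset.mem_univ _), Finset.card_univ, Fintype.card_fin]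
    have hUne : U.Nonempty := by
      rw [← Finset.card_pos]
      have : (0:ℝ) < (U.card : ℝ) := by rw [hcardU]; linarith
      exact_mod_cast this
    have hcsum : c = K⁻¹ • ∑ i ∈ U, EuclideanSpace.single i (1:ℝ) := by
      ext l'
      rw [PiLp.smul_apply, smul_eq_mul]
      have hsum_co : (∑ i ∈ U, EuclideanSpace.single i (1:ℝ)) l'
          = ∑ i ∈ U, (EuclideanSpace.single i (1:ℝ)) l' := by
        have hms := map_sum (EuclideanSpace.proj l' : Ept t →L[ℝ] ℝ)
          (fun i => EuclideanSpace.single i (1:ℝ)) U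
        exact hms
      rw [hc_coord, hsum_co]
      simp only [EuclideanSpace.single_apply]
      rw [Finset.sum_ite_eq U l' (fun _ => (1:ℝ))]
      by_cases hl' : l' = i₂
      · rw [if_pos hl', if_neg (by simp [hU, hl'])]
        ring
      · rw [if_neg hl', if_pos (by simp [hU, hl'])]
        ring
    -- base vertices as sigma elements
    have hbase : ∀ i : Fin t, i ≠ i₂ → ∃ u : (Σ i : Fin t, Fin (nn i)),
        u.1 = i ∧ vmap u = EuclideanSpace.single i 1 := by
      intro i hi
      have hni : nn i = 1 := h1 i hi
      refine ⟨⟨i, ⟨0, by omega⟩⟩, rfl, ?_⟩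
      rw [hvmap]
      simp only [if_neg hi]
    -- all base values ≤ M, with equality somewhere
    have hlmax : ∀ y ∈ P, l y ≤ M := hmem1.2
    have hexist : ∃ i ∈ U, l (EuclideanSpace.single i (1:ℝ)) = M := by
      by_contra hcon
      push_neg at hcon
      have hstrict : ∀ i ∈ U, l (EuclideanSpace.single i (1:ℝ)) < M := by
        intro i hi
        obtain ⟨u, hu1, hu2⟩ := hbase i (by rw [hU] at hi; exact (Finset.mem_erase.1 hi).1)
        have := hlmax _ (hu2 ▸ hPmem u)
        exact lt_of_le_of_ne this (hcon i hi)
      have hsumlt : ∑ i ∈ U, l (EuclideanSpace.single i (1:ℝ)) < (U.card : ℝ) * M := by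
        have htmp := Finset.sum_lt_sum_of_nonempty hUne hstrict
        rwa [Finset.sum_const, nsmul_eq_mul] at htmp
      have hlc2 : l c = K⁻¹ * ∑ i ∈ U, l (EuclideanSpace.single i (1:ℝ)) := by
        rw [hcsum, map_smul, map_sum, smul_eq_mul]
      rw [hlc] at hlc2
      rw [hcardU] at hsumlt
      have : K⁻¹ * ∑ i ∈ U, l (EuclideanSpace.single i (1:ℝ)) < K⁻¹ * (K * M) := by
        apply mul_lt_mul_of_pos_left hsumlt hKinv_pos
      rw [← mul_assoc, inv_mul_cancel₀ (ne_of_gt hKpos), one_mul] at this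
      linarith [hlc2, this]
    obtain ⟨i0, hi0U, hi0⟩ := hexist
    have hi0ne : i0 ≠ i₂ := by rw [hU] at hi0U; exact (Finset.mem_erase.1 hi0U).1
    obtain ⟨u, hu1, hu2⟩ := hbase i0 hi0ne
    have huseg : vmap u ∈ segment ℝ (vmap s) (vmap s') := by
      rw [hl]
      refine ⟨hPmem u, fun y hy => ?_⟩
      rw [hu2, hi0]
      exact hlmax y hy
    obtain ⟨α, β, hα, hβ, hαβ, hsum⟩ := huseg
    have hcoord : (α • vmap s + β • vmap s') i0 = vmap u i0 := by rw [hsum]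
    rw [PiLp.add_apply, PiLp.smul_apply, PiLp.smul_apply, evalA s hs2, evalA s' hs'2,
      hu2, EuclideanSpace.single_apply] at hcoord
    rw [if_neg hi0ne, if_neg hi0ne, if_pos rfl, smul_eq_mul, smul_eq_mul] at hcoord
    have : (α + β) * K⁻¹ = 1 := by linarith [hcoord]
    rw [hαβ, one_mul] at this
    rw [this] at hKinv_le
    norm_num at hKinv_le
  -- every exposed point is a vertex
  have hsur : ∀ x : Ept t, IsExposed ℝ P {x} → ∃ s, vmap s = x := by
    intro x hx
    have hxS : x ∈ S := exposed_mem_finset S (by rw [← hPdef]; exact hx)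
    obtain ⟨s, -, hs⟩ := Finset.mem_image.1 hxS
    exact ⟨s, hs⟩
  have hbij : Function.Bijective
      (fun s => (⟨vmap s, hsing s⟩ : {x : Ept t // IsExposed ℝ P {x}})) := by
    constructor
    · intro s s' h
      exact hinj (congrArg Subtype.val h)
    · rintro ⟨x, hx⟩
      obtain ⟨s, hs⟩ := hsur x hx
      exact ⟨s, Subtype.ext hs⟩
  refine ⟨P, ⟨S, hPdef⟩, ⟨SimpleGraph.Iso.symm ⟨Equiv.ofBijective _ hbij, ?_⟩⟩⟩
  intro s s'
  show (polyGraph P).Adj ⟨vmap s, hsing s⟩ ⟨vmap s', hsing s'⟩ ↔ _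
  simp only [SimpleGraph.comap_adj, SimpleGraph.top_adj]
  constructor
  · rintro ⟨hne, hseg⟩
    by_contra heq
    have hne' : s ≠ s' := fun hc => hne (by rw [hc])
    exact hnonedge s s' hne' (by simpa using heq) hseg
  · intro h
    refine ⟨?_, ?_⟩
    · intro hc
      have hvv : vmap s = vmap s' := congrArg Subtype.val hc
      exact h (congrArg Sigma.fst (hinj hvv))
    · by_cases hs : s.1 = i₂ <;> by_cases hs' : s'.1 = i₂
      · exact absurd (hs.trans hs'.symm) h
      · rw [segment_symm]
        exact hedgeBA s' s hs' hs
      · exact hedgeBA s s' hs hs'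
      · exact hedgeBB s s' hs hs' h
lemma multiset_count_char {t : ℕ} (nn : Fin t → ℕ) (hnn : ∀ i, nn i = 1 ∨ nn i = 2) :
    (Multiset.map nn Finset.univ.val = ({1, 2} : Multiset ℕ) ↔
      ((Finset.univ.filter fun i => nn i = 1).card = 1 ∧
       (Finset.univ.filter fun i => nn i = 2).card = 1)) ∧
    (Multiset.map nn Finset.univ.val = ({1, 1, 2} : Multiset ℕ) ↔
      ((Finset.univ.filter fun i => nn i = 1).card = 2 ∧
       (Finset.univ.filter fun i => nn i = 2).card = 1)) := by
  classical
  set M : Multiset ℕ := Multiset.map nn Finset.univ.val with hM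
  have hcount : ∀ a : ℕ, Multiset.count a M =
      (Finset.univ.filter fun i => nn i = a).card := by
    intro a
    rw [hM, Multiset.count_map, ← Finset.filter_val]
    have hfilt : (Finset.filter (fun a_1 => a = nn a_1) Finset.univ)
        = Finset.filter (fun i => nn i = a) Finset.univ := by
      ext i
      simp [eq_comm]
    rw [hfilt]
    rfl
  have hzero : ∀ a : ℕ, a ≠ 1 → a ≠ 2 → Multiset.count a M = 0 := by
    intro a ha1 ha2
    rw [hcount]
    rw [Finset.card_eq_zero]
    rw [Finset.filter_eq_empty_iff]
    intro i _
    rcases hnn i with h | h <;> omega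
  have c12 : ∀ a : ℕ, Multiset.count a ({1, 2} : Multiset ℕ) =
      if a = 1 then 1 else if a = 2 then 1 else 0 := by
    intro a
    by_cases h1 : a = 1 <;> by_cases h2 : a = 2 <;> simp [h1, h2, Multiset.count_cons,
      Multiset.count_singleton] <;> omega
  have c112 : ∀ a : ℕ, Multiset.count a ({1, 1, 2} : Multiset ℕ) =
      if a = 1 then 2 else if a = 2 then 1 else 0 := by
    intro a
    by_cases h1 : a = 1 <;> by_cases h2 : a = 2 <;> simp [h1, h2, Multiset.count_cons,
      Multiset.count_singleton] <;> omega
  constructor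
  · constructor
    · intro h
      constructor
      · rw [← hcount 1, h, c12]; norm_num
      · rw [← hcount 2, h, c12]; norm_num
    · rintro ⟨h1, h2⟩
      apply Multiset.ext.2
      intro a
      rw [c12]
      by_cases ha1 : a = 1
      · rw [if_pos ha1, ha1, hcount]; exact h1
      · by_cases ha2 : a = 2
        · rw [if_neg ha1, if_pos ha2, ha2, hcount]; exact h2
        · rw [if_neg ha1, if_neg ha2]; exact hzero a ha1 ha2
  · constructor
    · intro h
      constructor
      · rw [← hcount 1, h, c112]; norm_num
      · rw [← hcount 2, h, c112]; norm_num
    · rintro ⟨h1, h2⟩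
      apply Multiset.ext.2
      intro a
      rw [c112]
      by_cases ha1 : a = 1
      · rw [if_pos ha1, ha1, hcount]; exact h1
      · by_cases ha2 : a = 2
        · rw [if_neg ha1, if_pos ha2, ha2, hcount]; exact h2
        · rw [if_neg ha1, if_neg ha2]; exact hzero a ha1 ha2

/-- Espenschied: for `t > 1` and part sizes `nᵢ ∈ {1,2}`, the complete
multipartite graph `K_{n₁,…,n_t}` is the graph of a polytope iff the multiset of part
sizes is neither `{1,2}` nor `{1,1,2}`. -/
theorem multipartite_polytopal (t : ℕ) (ht : 1 < t) (nn : Fin t → ℕ)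
    (hnn : ∀ i, nn i = 1 ∨ nn i = 2) :
    (∃ (N : ℕ) (P : Set (Ept N)), IsPolytope P ∧
        Nonempty (polyGraph P ≃g SimpleGraph.completeMultipartiteGraph fun i => Fin (nn i))) ↔
      (Multiset.map nn Finset.univ.val ≠ ({1, 2} : Multiset ℕ) ∧
       Multiset.map nn Finset.univ.val ≠ ({1, 1, 2} : Multiset ℕ)) := by
  classical
  obtain ⟨hchar12, hchar112⟩ := multiset_count_char nn hnn
  set k : ℕ := (Finset.univ.filter fun i => nn i = 1).card with hk
  set m : ℕ := (Finset.univ.filter fun i => nn i = 2).card with hm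
  have hkm : k + m = t := by
    rw [hk, hm]
    have hcompl : (Finset.univ.filter fun i => nn i = 2)
        = (Finset.univ.filter fun i => ¬ nn i = 1) := by
      apply Finset.filter_congr
      intro i _
      rcases hnn i with h | h <;> simp [h]
    rw [hcompl, Finset.card_filter_add_card_filter_not, Finset.card_univ,
      Fintype.card_fin]
  have hKadj : ∀ u v : Σ i : Fin t, Fin (nn i),
      (SimpleGraph.completeMultipartiteGraph fun i => Fin (nn i)).Adj u v ↔ u.1 ≠ v.1 := by
    intro u v
    simp
  constructor
  · rintro ⟨N, P, ⟨S, hPS⟩, ⟨iso⟩⟩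
    set φ := iso.symm with hφ
    have hval : ∀ y (hy : IsExposed ℝ P {y}), y = (φ (iso ⟨y, hy⟩)).1 := by
      intro y hy
      have hsa := iso.symm_apply_apply ⟨y, hy⟩
      rw [hφ]
      exact (congrArg Subtype.val hsa).symm
    constructor
    · -- not K_{1,2}
      intro hMeq
      obtain ⟨hk1, hm1⟩ := hchar12.1 hMeq
      obtain ⟨i1, hi1⟩ := Finset.card_pos.1 (by rw [← hk]; omega)
      obtain ⟨i2, hi2⟩ := Finset.card_pos.1 (by rw [← hm]; omega)
      have hni1 : nn i1 = 1 := (Finset.mem_filter.1 hi1).2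
      have hni2 : nn i2 = 2 := (Finset.mem_filter.1 hi2).2
      have hi12 : i1 ≠ i2 := fun h => by rw [h, hni2] at hni1; omega
      set A : Σ i : Fin t, Fin (nn i) := ⟨i1, ⟨0, by omega⟩⟩ with hA
      set B : Σ i : Fin t, Fin (nn i) := ⟨i2, ⟨0, by omega⟩⟩ with hB
      set C : Σ i : Fin t, Fin (nn i) := ⟨i2, ⟨1, by omega⟩⟩ with hC
      have hAB : A ≠ B := fun h => hi12 (congrArg Sigma.fst h)
      have hAC : A ≠ C := fun h => hi12 (congrArg Sigma.fst h)
      have hBC : B ≠ C := by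
        intro h
        have := congrArg (fun z : Σ i : Fin t, Fin (nn i) => (z.2 : ℕ)) h
        simp [hB, hC] at this
      have hvne : ∀ u v : Σ i : Fin t, Fin (nn i), u ≠ v → (φ u).1 ≠ (φ v).1 := by
        intro u v huv h
        exact huv (φ.injective (Subtype.ext h))
      have hadj : ∀ u v : Σ i : Fin t, Fin (nn i), u.1 ≠ v.1 →
          IsExposed ℝ P (segment ℝ (φ u).1 (φ v).1) := by
        intro u v huv
        have := φ.map_rel_iff.2 ((hKadj u v).2 huv)
        exact this.2
      have hnadj : ¬ IsExposed ℝ P (segment ℝ (φ B).1 (φ C).1) := by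
        intro hcon
        have : (polyGraph P).Adj (φ B) (φ C) := ⟨fun h => hBC (φ.injective h), hcon⟩
        have := φ.map_rel_iff.1 this
        rw [hKadj] at this
        exact this rfl
      -- all exposed points are among the three
      have hall : ∀ y : Ept N, IsExposed ℝ P {y} →
          y = (φ A).1 ∨ y = (φ B).1 ∨ y = (φ C).1 := by
        intro y hy
        have hcases : iso ⟨y, hy⟩ = A ∨ iso ⟨y, hy⟩ = B ∨ iso ⟨y, hy⟩ = C := by
          obtain ⟨i, j⟩ := iso ⟨y, hy⟩
          by_cases hi : nn i = 1
          · left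
            have : i ∈ Finset.univ.filter fun i => nn i = 1 := by
              simp [Finset.mem_filter, hi]
            have hfs : (Finset.univ.filter fun i => nn i = 1) = {i1} := by
              apply (Finset.eq_of_subset_of_card_le (Finset.singleton_subset_iff.2 hi1) ?_).symm
              rw [← hk, hk1, Finset.card_singleton]
            rw [hfs, Finset.mem_singleton] at this
            subst this
            rw [hA]
            congr 1
            apply Fin.ext
            have := j.2
            omega
          · have hni : nn i = 2 := (hnn i).resolve_left hi
            have : i ∈ Finset.univ.filter fun i => nn i = 2 := by
              simp [Finset.mem_filter, hni]
            have hfs : (Finset.univ.filter fun i => nn i = 2) = {i2} := by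
              apply (Finset.eq_of_subset_of_card_le (Finset.singleton_subset_iff.2 hi2) ?_).symm
              rw [← hm, hm1, Finset.card_singleton]
            rw [hfs, Finset.mem_singleton] at this
            subst this
            have hj := j.2
            rcases (by omega : (j : ℕ) = 0 ∨ (j : ℕ) = 1) with h | h
            · right; left
              rw [hB]
              congr 1
              exact Fin.ext h
            · right; right
              rw [hC]
              congr 1
              exact Fin.ext h
        rcases hcases with h | h | h
        · left; rw [hval y hy, h]
        · right; left; rw [hval y hy, h]
        · right; right; rw [hval y hy, h]
      exact no_K12 S hPS (φ A).2 (φ B).2 (φ C).2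
        (hvne A B hAB) (hvne A C hAC) (hvne B C hBC) hall hnadj
    · -- not K_{1,1,2}
      intro hMeq
      obtain ⟨hk2, hm1⟩ := hchar112.1 hMeq
      obtain ⟨i1, hi1m, i1', hi1'm, hi11'⟩ := Finset.one_lt_card.1
        (by rw [← hk]; omega : 1 < (Finset.univ.filter fun i => nn i = 1).card)
      obtain ⟨i2, hi2⟩ := Finset.card_pos.1 (by rw [← hm]; omega)
      have hni1 : nn i1 = 1 := (Finset.mem_filter.1 hi1m).2
      have hni1' : nn i1' = 1 := (Finset.mem_filter.1 hi1'm).2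
      have hni2 : nn i2 = 2 := (Finset.mem_filter.1 hi2).2
      have hi12 : i1 ≠ i2 := fun h => by rw [h, hni2] at hni1; omega
      have hi1'2 : i1' ≠ i2 := fun h => by rw [h, hni2] at hni1'; omega
      set A : Σ i : Fin t, Fin (nn i) := ⟨i1, ⟨0, by omega⟩⟩ with hA
      set A' : Σ i : Fin t, Fin (nn i) := ⟨i1', ⟨0, by omega⟩⟩ with hA'
      set B : Σ i : Fin t, Fin (nn i) := ⟨i2, ⟨0, by omega⟩⟩ with hB
      set C : Σ i : Fin t, Fin (nn i) := ⟨i2, ⟨1, by omega⟩⟩ with hC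
      have hAA' : A ≠ A' := fun h => hi11' (congrArg Sigma.fst h)
      have hAB : A ≠ B := fun h => hi12 (congrArg Sigma.fst h)
      have hAC : A ≠ C := fun h => hi12 (congrArg Sigma.fst h)
      have hA'B : A' ≠ B := fun h => hi1'2 (congrArg Sigma.fst h)
      have hA'C : A' ≠ C := fun h => hi1'2 (congrArg Sigma.fst h)
      have hBC : B ≠ C := by
        intro h
        have := congrArg (fun z : Σ i : Fin t, Fin (nn i) => (z.2 : ℕ)) h
        simp [hB, hC] at this
      have hvne : ∀ u v : Σ i : Fin t, Fin (nn i), u ≠ v → (φ u).1 ≠ (φ v).1 := by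
        intro u v huv h
        exact huv (φ.injective (Subtype.ext h))
      have hadj : ∀ u v : Σ i : Fin t, Fin (nn i), u.1 ≠ v.1 →
          IsExposed ℝ P (segment ℝ (φ u).1 (φ v).1) := by
        intro u v huv
        exact (φ.map_rel_iff.2 ((hKadj u v).2 huv)).2
      have hnadj : ¬ IsExposed ℝ P (segment ℝ (φ B).1 (φ C).1) := by
        intro hcon
        have hpadj : (polyGraph P).Adj (φ B) (φ C) := ⟨fun h => hBC (φ.injective h), hcon⟩
        have := φ.map_rel_iff.1 hpadj
        rw [hKadj] at this
        exact this rfl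
      have hall : ∀ y : Ept N, IsExposed ℝ P {y} →
          y = (φ A).1 ∨ y = (φ A').1 ∨ y = (φ B).1 ∨ y = (φ C).1 := by
        intro y hy
        have hcases : iso ⟨y, hy⟩ = A ∨ iso ⟨y, hy⟩ = A' ∨ iso ⟨y, hy⟩ = B ∨
            iso ⟨y, hy⟩ = C := by
          obtain ⟨i, j⟩ := iso ⟨y, hy⟩
          by_cases hi : nn i = 1
          · have : i ∈ Finset.univ.filter fun i => nn i = 1 := by
              simp [Finset.mem_filter, hi]
            have hfs : (Finset.univ.filter fun i => nn i = 1) = {i1, i1'} := by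
              apply (Finset.eq_of_subset_of_card_le ?_ ?_).symm
              · intro z hz
                rw [Finset.mem_insert, Finset.mem_singleton] at hz
                rcases hz with rfl | rfl
                · exact hi1m
                · exact hi1'm
              · rw [← hk, hk2, Finset.card_insert_of_notMem (by simpa using hi11'),
                  Finset.card_singleton]
            rw [hfs, Finset.mem_insert, Finset.mem_singleton] at this
            rcases this with rfl | rfl
            · left
              rw [hA]
              congr 1
              apply Fin.ext
              have := j.2
              omega
            · right; left
              rw [hA']
              congr 1
              apply Fin.ext
              have := j.2
              omega
          · have hni : nn i = 2 := (hnn i).resolve_left hi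
            have : i ∈ Finset.univ.filter fun i => nn i = 2 := by
              simp [Finset.mem_filter, hni]
            have hfs : (Finset.univ.filter fun i => nn i = 2) = {i2} := by
              apply (Finset.eq_of_subset_of_card_le (Finset.singleton_subset_iff.2 hi2) ?_).symm
              rw [← hm, hm1, Finset.card_singleton]
            rw [hfs, Finset.mem_singleton] at this
            subst this
            have hj := j.2
            rcases (by omega : (j : ℕ) = 0 ∨ (j : ℕ) = 1) with h | h
            · right; right; left
              rw [hB]
              congr 1
              exact Fin.ext h
            · right; right; right
              rw [hC]
              congr 1
              exact Fin.ext h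
        rcases hcases with h | h | h | h
        · left; rw [hval y hy, h]
        · right; left; rw [hval y hy, h]
        · right; right; left; rw [hval y hy, h]
        · right; right; right; rw [hval y hy, h]
      exact no_K112 S hPS (φ A).2 (φ A').2 (φ B).2 (φ C).2
        (hvne A A' hAA') (hvne A B hAB) (hvne A C hAC) (hvne A' B hA'B) (hvne A' C hA'C)
        (hvne B C hBC) hall
        (hadj A A' hi11') (hadj A B hi12) (hadj A C hi12) (hadj A' B hi1'2)
        (hadj A' C hi1'2) hnadj
  · rintro ⟨h12, h112⟩
    have hnot1 : ¬ (k = 1 ∧ m = 1) := fun h => h12 (hchar12.2 ⟨by rw [hk] at h ⊢; exact h.1,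
      by rw [hm] at h ⊢; exact h.2⟩)
    have hnot2 : ¬ (k = 2 ∧ m = 1) := fun h => h112 (hchar112.2 ⟨by rw [hk] at h ⊢; exact h.1,
      by rw [hm] at h ⊢; exact h.2⟩)
    by_cases hm1 : m = 1
    · -- one part of size two : bipyramid over a simplex
      have hk3 : 3 ≤ k := by omega
      have ht4 : 4 ≤ t := by omega
      obtain ⟨i2, hfs⟩ := Finset.card_eq_one.1 (by rw [← hm]; exact hm1)
      have hni2 : nn i2 = 2 := by
        have : i2 ∈ Finset.univ.filter fun i => nn i = 2 := by
          rw [hfs]; exact Finset.mem_singleton_self i2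
        exact (Finset.mem_filter.1 this).2
      have h1 : ∀ i, i ≠ i2 → nn i = 1 := by
        intro i hi
        rcases hnn i with h | h
        · exact h
        · exfalso
          apply hi
          have : i ∈ Finset.univ.filter fun i => nn i = 2 := by
            simp [Finset.mem_filter, h]
          rw [hfs, Finset.mem_singleton] at this
          exact this
      obtain ⟨P, hpoly, hiso⟩ := constructionC nn i2 hni2 h1 ht4
      exact ⟨t, P, hpoly, hiso⟩
    · -- zero or at least two parts of size two
      have hmlarge : ∀ i, nn i = 2 → ∃ i', i' ≠ i ∧ nn i' = 2 := by
        intro i hi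
        have himem : i ∈ Finset.univ.filter fun i => nn i = 2 := by
          simp [Finset.mem_filter, hi]
        have hpos : 0 < (Finset.univ.filter fun i => nn i = 2).card :=
          Finset.card_pos.2 ⟨i, himem⟩
        have hm2 : 1 < (Finset.univ.filter fun i => nn i = 2).card := by
          rw [← hm] at hpos ⊢
          omega
        obtain ⟨i', hi'm, hi'ne⟩ := Finset.exists_mem_ne hm2 i
        exact ⟨i', hi'ne, (Finset.mem_filter.1 hi'm).2⟩
      obtain ⟨P, hpoly, hiso⟩ := constructionB nn hnn hmlarge
      exact ⟨t, P, hpoly, hiso⟩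
end
end
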